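/- arXiv:0903.3236 — 5 statements merged into one kernel-verified Lean document; each statement's English description precedes it below -/
import Mathlib

section
/- Let a, c ∈ ℂ and δ ∈ (0,1). Then for all r > 0, (1/(2π)) ∫₀^{2π} log⁺|1 + c/(r e^{iθ} − a)| dθ ≤ (1/δ) log⁺(1 + |c|^δ/((1−δ) r^δ)). -/
open Real MeasureTheory NNReal intervalIntegral


/-- log⁺ x = max {0, log x}. -/
noncomputable def posLog (x : ℝ) : ℝ := max 0 (Real.log x)

theorem myadd_rpow (x y p : ℝ) (hx : 0 ≤ x) (hy : 0 ≤ y) (hp : 0 ≤ p) (hp1 : p ≤ 1) :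
    (x + y) ^ p ≤ x ^ p + y ^ p := by
  have h := NNReal.rpow_add_le_add_rpow x.toNNReal y.toNNReal hp hp1
  have h' := NNReal.coe_le_coe.2 h
  push_cast [NNReal.coe_rpow, Real.coe_toNNReal _ hx, Real.coe_toNNReal _ hy] at h'
  exact h'

theorem point_bound (c z : ℂ) (δ : ℝ) (hδ0 : 0 < δ) (hδ1 : δ ≤ 1) :
    _root_.posLog ‖1 + c / z‖ ≤ (1 / δ) * Real.log (1 + ‖c‖ ^ δ / ‖z‖ ^ δ) := by
  rcases eq_or_ne z 0 with hz | hz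
  · simp [hz, _root_.posLog, Real.zero_rpow hδ0.ne']
  have hzpos : (0:ℝ) < ‖z‖ := norm_pos_iff.2 hz
  set t : ℝ := ‖c‖ / ‖z‖ with ht
  have ht0 : 0 ≤ t := by positivity
  have h1 : _root_.posLog ‖1 + c / z‖ ≤ Real.log (1 + t) := by
    have hb : ‖1 + c / z‖ ≤ 1 + t := by
      calc ‖1 + c / z‖ ≤ ‖(1:ℂ)‖ + ‖c / z‖ := norm_add_le _ _
        _ = 1 + t := by rw [norm_one, norm_div]
    have hlog1 : (0:ℝ) ≤ Real.log (1 + t) := Real.log_nonneg (by linarith)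
    rcases eq_or_lt_of_le (norm_nonneg (1 + c / z)) with h0 | h0
    · simp [_root_.posLog, ← h0, hlog1]
    · exact max_le hlog1 (Real.log_le_log h0 hb)
  have h2 : Real.log (1 + t) ≤ (1 / δ) * Real.log (1 + t ^ δ) := by
    have key : (1 + t) ^ δ ≤ 1 + t ^ δ := by
      have := myadd_rpow 1 t δ zero_le_one ht0 hδ0.le hδ1
      simpa using this
    have hlog : δ * Real.log (1 + t) = Real.log ((1 + t) ^ δ) :=
      (Real.log_rpow (by linarith) δ).symm
    have : Real.log ((1 + t) ^ δ) ≤ Real.log (1 + t ^ δ) :=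
      Real.log_le_log (Real.rpow_pos_of_pos (by linarith) δ) key
    rw [← hlog] at this
    rw [one_div, inv_mul_eq_div, le_div_iff₀ hδ0, mul_comm]
    exact this
  have h3 : t ^ δ = ‖c‖ ^ δ / ‖z‖ ^ δ := Real.div_rpow (norm_nonneg c) (norm_nonneg z) δ
  calc _root_.posLog ‖1 + c / z‖ ≤ Real.log (1 + t) := h1
    _ ≤ (1 / δ) * Real.log (1 + t ^ δ) := h2
    _ = (1 / δ) * Real.log (1 + ‖c‖ ^ δ / ‖z‖ ^ δ) := by rw [h3]


theorem norm_lower (a : ℂ) (r θ : ℝ) (hr : 0 ≤ r) :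
    r * |Real.sin (θ - a.arg)| ≤ ‖(r : ℂ) * Complex.exp (θ * Complex.I) - a‖ := by
  set φ : ℝ := a.arg with hφ
  have hu : ‖Complex.exp (-(φ:ℂ) * Complex.I)‖ = 1 := by
    rw [Complex.norm_exp]
    simp
  have hnorm : ‖(r : ℂ) * Complex.exp (θ * Complex.I) - a‖
      = ‖Complex.exp (-(φ:ℂ) * Complex.I) * ((r : ℂ) * Complex.exp (θ * Complex.I) - a)‖ := by
    rw [norm_mul, hu, one_mul]
  have ha : Complex.exp (-(φ:ℂ) * Complex.I) * a = ((‖a‖ : ℝ) : ℂ) := by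
    conv_lhs => rw [← Complex.norm_mul_exp_arg_mul_I a]
    rw [mul_comm, mul_assoc, ← Complex.exp_add, ← hφ]
    ring_nf
    simp [Complex.exp_zero]
  have hmul : Complex.exp (-(φ:ℂ) * Complex.I) * ((r : ℂ) * Complex.exp (θ * Complex.I))
      = (r : ℂ) * Complex.exp (((θ - φ : ℝ) : ℂ) * Complex.I) := by
    rw [mul_comm, mul_assoc, ← Complex.exp_add]
    push_cast
    ring_nf
  have him : (Complex.exp (-(φ:ℂ) * Complex.I) * ((r : ℂ) * Complex.exp (θ * Complex.I) - a)).im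
      = r * Real.sin (θ - φ) := by
    rw [mul_sub, ha, hmul]
    simp [Complex.exp_mul_I, ← Complex.ofReal_sub, ← Complex.ofReal_sin, ← Complex.ofReal_cos]
  calc r * |Real.sin (θ - φ)| = |r * Real.sin (θ - φ)| := by
        rw [abs_mul, abs_of_nonneg hr]
    _ = |(Complex.exp (-(φ:ℂ) * Complex.I) * ((r : ℂ) * Complex.exp (θ * Complex.I) - a)).im| := by
        rw [him]
    _ ≤ ‖Complex.exp (-(φ:ℂ) * Complex.I) * ((r : ℂ) * Complex.exp (θ * Complex.I) - a)‖ :=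
        Complex.abs_im_le_norm _
    _ = ‖(r : ℂ) * Complex.exp (θ * Complex.I) - a‖ := by rw [← hnorm]


noncomputable def sinPow (δ : ℝ) : ℝ → ℝ := fun x => (|Real.sin x| ^ δ)⁻¹

theorem sinPow_eq (δ x : ℝ) : sinPow δ x = |Real.sin x| ^ (-δ) :=
  (Real.rpow_neg (abs_nonneg _) δ).symm

theorem sinPow_per (δ : ℝ) : Function.Periodic (sinPow δ) π := by
  intro x; simp [sinPow, Real.sin_add_pi]

theorem sinPow_symm (δ : ℝ) (x : ℝ) : sinPow δ (π - x) = sinPow δ x := by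
  simp [sinPow, Real.sin_pi_sub]

theorem quarter_bound {δ : ℝ} (hδ0 : 0 < δ) (x : ℝ) (hx : x ∈ Set.Icc 0 (π/2)) :
    sinPow δ x ≤ (π/2) ^ δ * x ^ (-δ) := by
  obtain ⟨hx0, hx2⟩ := hx
  rcases eq_or_lt_of_le hx0 with h0 | h0
  · rw [sinPow_eq, ← h0]
    simp [Real.zero_rpow (by linarith : -δ ≠ 0)]
  have hs : 2/π * x ≤ Real.sin x := Real.mul_le_sin hx0 hx2
  have hsx : |Real.sin x| = Real.sin x := abs_of_nonneg (Real.sin_nonneg_of_nonneg_of_le_pi hx0 (by linarith [Real.pi_pos]))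
  have hpos : 0 < 2/π * x := by positivity
  have h1 : Real.sin x ^ (-δ) ≤ (2/π * x) ^ (-δ) :=
    Real.rpow_le_rpow_of_nonpos hpos hs (by linarith)
  have h2 : (2/π * x) ^ (-δ) = (π/2) ^ δ * x ^ (-δ) := by
    rw [Real.mul_rpow (by positivity) hx0]
    have : (2/π : ℝ) ^ (-δ) = (π/2) ^ δ := by
      rw [Real.rpow_neg (by positivity), ← Real.inv_rpow (by positivity), inv_div]
    rw [this]
  rw [sinPow_eq, hsx]
  calc Real.sin x ^ (-δ) ≤ (2/π * x) ^ (-δ) := h1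
    _ = (π/2) ^ δ * x ^ (-δ) := h2

theorem sinPow_meas {δ : ℝ} (hδ : 0 < δ) : Measurable (sinPow δ) :=
  (((Real.continuous_rpow_const hδ.le).comp (Real.continuous_sin.abs)).measurable).inv

theorem sinPow_nonneg (δ : ℝ) (x : ℝ) : 0 ≤ sinPow δ x := by
  rw [sinPow_eq]; exact Real.rpow_nonneg (abs_nonneg _) _

theorem quarter_integrable {δ : ℝ} (hδ0 : 0 < δ) (hδ1 : δ < 1) :
    IntervalIntegrable (sinPow δ) volume 0 (π/2) := by
  have hb : IntervalIntegrable (fun x : ℝ => (π/2) ^ δ * x ^ (-δ)) volume 0 (π/2) :=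
    (intervalIntegral.intervalIntegrable_rpow' (by linarith)).const_mul _
  rw [intervalIntegrable_iff_integrableOn_Ioc_of_le (by positivity)] at hb ⊢
  refine Integrable.mono' hb ((sinPow_meas hδ0).aestronglyMeasurable.restrict) ?_
  refine (ae_restrict_iff' measurableSet_Ioc).2 (ae_of_all _ fun x hx => ?_)
  rw [Real.norm_eq_abs, abs_of_nonneg (sinPow_nonneg δ x)]
  exact quarter_bound hδ0 x ⟨hx.1.le, hx.2⟩

theorem quarter_value {δ : ℝ} (hδ0 : 0 < δ) (hδ1 : δ < 1) :
    (∫ x in (0:ℝ)..(π/2), sinPow δ x) ≤ (π/2) / (1 - δ) := by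
  have hπ : (0:ℝ) < π/2 := by positivity
  have hb : IntervalIntegrable (fun x : ℝ => (π/2) ^ δ * x ^ (-δ)) volume 0 (π/2) :=
    (intervalIntegral.intervalIntegrable_rpow' (by linarith)).const_mul _
  have hmono : (∫ x in (0:ℝ)..(π/2), sinPow δ x) ≤ ∫ x in (0:ℝ)..(π/2), (π/2) ^ δ * x ^ (-δ) := by
    refine intervalIntegral.integral_mono_on hπ.le (quarter_integrable hδ0 hδ1) hb ?_
    exact fun x hx => quarter_bound hδ0 x hx
  have hval : (∫ x in (0:ℝ)..(π/2), (π/2) ^ δ * x ^ (-δ)) = (π/2) / (1 - δ) := by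
    rw [intervalIntegral.integral_const_mul, integral_rpow (Or.inl (by linarith))]
    rw [Real.zero_rpow (by linarith : -δ + 1 ≠ 0)]
    rw [sub_zero, ← mul_div_assoc, ← Real.rpow_add hπ]
    norm_num
    ring_nf
  rw [hval] at hmono; exact hmono

theorem half_integrable {δ : ℝ} (hδ0 : 0 < δ) (hδ1 : δ < 1) :
    IntervalIntegrable (sinPow δ) volume 0 π := by
  have hQ := quarter_integrable hδ0 hδ1
  have h2 : IntervalIntegrable (sinPow δ) volume (π/2) π := by
    have h := hQ.comp_sub_left π
    rw [funext (sinPow_symm δ)] at h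
    have : IntervalIntegrable (sinPow δ) volume (π - 0) (π - π/2) := h
    rw [sub_zero] at this
    have h2' : π - π/2 = π/2 := by ring
    rw [h2'] at this
    exact this.symm
  exact hQ.trans h2

theorem full_integrable {δ : ℝ} (hδ0 : 0 < δ) (hδ1 : δ < 1) :
    IntervalIntegrable (sinPow δ) volume 0 (2*π) := by
  have hH := half_integrable hδ0 hδ1
  have h3 : IntervalIntegrable (sinPow δ) volume π (2*π) := by
    have h := hH.comp_sub_right π
    have heq : (fun x => sinPow δ (x - π)) = sinPow δ := funext fun x => (sinPow_per δ).sub_eq x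
    rw [heq] at h
    have : IntervalIntegrable (sinPow δ) volume (0 + π) (π + π) := h
    rw [zero_add] at this
    rwa [show π + π = 2*π by ring] at this
  exact hH.trans h3

theorem full_value {δ : ℝ} (hδ0 : 0 < δ) (hδ1 : δ < 1) :
    (∫ x in (0:ℝ)..(2*π), sinPow δ x) ≤ 2*π / (1 - δ) := by
  have hQ := quarter_integrable hδ0 hδ1
  have hH := half_integrable hδ0 hδ1
  have h2 : IntervalIntegrable (sinPow δ) volume (π/2) π := hQ.symm.trans hH
  have h3 : IntervalIntegrable (sinPow δ) volume π (2*π) := hH.symm.trans (full_integrable hδ0 hδ1)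
  have splitA : (∫ x in (0:ℝ)..(2*π), sinPow δ x)
      = (∫ x in (0:ℝ)..π, sinPow δ x) + ∫ x in π..(2*π), sinPow δ x :=
    (intervalIntegral.integral_add_adjacent_intervals hH h3).symm
  have hper : (∫ x in π..(2*π), sinPow δ x) = ∫ x in (0:ℝ)..π, sinPow δ x := by
    have := (sinPow_per δ).intervalIntegral_add_eq π 0
    rw [zero_add] at this
    have h2π : π + π = 2*π := by ring
    rw [h2π] at this
    exact this
  have splitB : (∫ x in (0:ℝ)..π, sinPow δ x)
      = (∫ x in (0:ℝ)..(π/2), sinPow δ x) + ∫ x in (π/2)..π, sinPow δ x :=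
    (intervalIntegral.integral_add_adjacent_intervals hQ h2).symm
  have hsym : (∫ x in (π/2)..π, sinPow δ x) = ∫ x in (0:ℝ)..(π/2), sinPow δ x := by
    have := intervalIntegral.integral_comp_sub_left (a := 0) (b := π/2) (sinPow δ) π
    rw [funext (sinPow_symm δ)] at this
    rw [sub_zero] at this
    have h2' : π - π/2 = π/2 := by ring
    rw [h2'] at this
    exact this.symm
  have hq := quarter_value hδ0 hδ1
  rw [splitA, hper, splitB, hsym]
  have : (0:ℝ) < 1 - δ := by linarith
  calc (∫ x in (0:ℝ)..(π/2), sinPow δ x) + (∫ x in (0:ℝ)..(π/2), sinPow δ x)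
        + ((∫ x in (0:ℝ)..(π/2), sinPow δ x) + (∫ x in (0:ℝ)..(π/2), sinPow δ x))
      ≤ (π/2)/(1-δ) + (π/2)/(1-δ) + ((π/2)/(1-δ) + (π/2)/(1-δ)) := by
        gcongr
    _ = 2*π/(1-δ) := by ring

theorem shifted_integrable {δ : ℝ} (hδ0 : 0 < δ) (hδ1 : δ < 1) (k : ℤ) :
    IntervalIntegrable (sinPow δ) volume ((k:ℝ)*π) ((k+1)*π) := by
  have hH := half_integrable hδ0 hδ1
  have h := hH.comp_sub_right ((k:ℝ)*π)
  have heq : (fun x => sinPow δ (x - (k:ℝ)*π)) = sinPow δ :=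
    funext fun x => (sinPow_per δ).sub_int_mul_eq k
  rw [heq, zero_add] at h
  rwa [show π + (k:ℝ)*π = (k+1)*π by ring] at h

theorem range_integrable {δ : ℝ} (hδ0 : 0 < δ) (hδ1 : δ < 1) :
    IntervalIntegrable (sinPow δ) volume (-(2*π)) (4*π) := by
  have hF := full_integrable hδ0 hδ1
  have heq2 : (fun x => sinPow δ (x - 2*π)) = sinPow δ := funext fun x => by
    have h := (sinPow_per δ).sub_int_mul_eq (x := x) (n := (2:ℤ))
    push_cast at h
    convert h using 2
  have hB := hF.comp_sub_right (2*π)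
  rw [heq2, zero_add, show 2*π+2*π = 4*π by ring] at hB
  have heq3 : (fun x => sinPow δ (x - -(2*π))) = sinPow δ := funext fun x => by
    have h := (sinPow_per δ).sub_int_mul_eq (x := x) (n := (-2:ℤ))
    push_cast at h
    convert h using 2
    ring
  have hC := hF.comp_sub_right (-(2*π))
  rw [heq3, zero_add, show 2*π + -(2*π) = 0 by ring] at hC
  exact (hC.trans hF).trans hB

theorem any_integrable {δ : ℝ} (hδ0 : 0 < δ) (hδ1 : δ < 1) {s t : ℝ}
    (hs : -(2*π) ≤ s) (hs' : s ≤ 4*π) (ht : -(2*π) ≤ t) (ht' : t ≤ 4*π) :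
    IntervalIntegrable (sinPow δ) volume s t := by
  refine (range_integrable hδ0 hδ1).mono_set ?_
  rw [Set.uIcc_subset_uIcc_iff_mem]
  constructor
  · rw [Set.mem_uIcc]; left; exact ⟨hs, hs'⟩
  · rw [Set.mem_uIcc]; left; exact ⟨ht, ht'⟩


theorem stmt0 (a c : ℂ) (δ : ℝ) (hδ0 : 0 < δ) (hδ1 : δ < 1) :
    ∀ r : ℝ, 0 < r →
      (1 / (2 * π)) * (∫ θ in (0:ℝ)..(2 * π),
          _root_.posLog ‖1 + c / (r * Complex.exp (θ * Complex.I) - a)‖) ≤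
        (1 / δ) * _root_.posLog (1 + ‖c‖ ^ δ / ((1 - δ) * r ^ δ)) := by
  intro r hr
  have hπ := Real.pi_pos
  set φ : ℝ := a.arg with hφdef
  have hφ1 : -π < φ := Complex.neg_pi_lt_arg a
  have hφ2 : φ ≤ π := Complex.arg_le_pi a
  set z : ℝ → ℂ := fun θ => (r:ℂ) * Complex.exp ((θ:ℂ) * Complex.I) - a with hz
  set u : ℝ → ℝ := fun θ => ‖c‖^δ / ‖z θ‖^δ with hu
  set K : ℝ := ‖c‖^δ / r^δ with hK
  set g : ℝ → ℝ := fun θ => K * sinPow δ (θ - φ) with hg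
  have hK0 : 0 ≤ K := by
    apply div_nonneg (Real.rpow_nonneg (norm_nonneg c) δ) (Real.rpow_nonneg hr.le δ)
  -- continuity / measurability
  have hz_cont : Continuous z :=
    (continuous_const.mul (Complex.continuous_exp.comp
      (Complex.continuous_ofReal.mul continuous_const))).sub continuous_const
  have meas_u : Measurable u := by
    have h1 : Continuous fun θ => ‖z θ‖ ^ δ :=
      (continuous_norm.comp hz_cont).rpow_const (fun x => Or.inr hδ0.le)
    exact measurable_const.div h1.measurable
  have meas_f : Measurable fun θ => _root_.posLog ‖1 + c / z θ‖ := by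
    have h1 : Measurable fun θ => ‖(1:ℂ) + c / z θ‖ :=
      measurable_norm.comp (measurable_const.add (measurable_const.div hz_cont.measurable))
    exact (measurable_const.max Real.measurable_log).comp h1
  -- pointwise bound via point_bound
  have hpoint : ∀ θ : ℝ, _root_.posLog ‖1 + c / z θ‖ ≤ (1/δ) * Real.log (1 + u θ) :=
    fun θ => point_bound c (z θ) δ hδ0 hδ1.le
  -- a.e. bound u ≤ g
  have hnull : volume {θ : ℝ | Real.sin (θ - φ) = 0} = 0 := by
    refine measure_mono_null (fun θ hθ => ?_) ((Set.countable_range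
      (fun n : ℤ => φ + n * π)).measure_zero _)
    rw [Set.mem_setOf_eq, Real.sin_eq_zero_iff] at hθ
    obtain ⟨n, hn⟩ := hθ
    refine ⟨n, ?_⟩
    show φ + (n:ℝ) * π = θ
    linarith
  have hub : ∀ θ : ℝ, Real.sin (θ - φ) ≠ 0 → u θ ≤ g θ := by
    intro θ hsθ
    have hsin : 0 < |Real.sin (θ - φ)| := abs_pos.2 hsθ
    have hlow : r * |Real.sin (θ - φ)| ≤ ‖z θ‖ := norm_lower a r θ hr.le
    have hlowpos : 0 < r * |Real.sin (θ - φ)| := by positivity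
    have hrp : (r * |Real.sin (θ - φ)|) ^ δ ≤ ‖z θ‖ ^ δ :=
      Real.rpow_le_rpow hlowpos.le hlow hδ0.le
    have hrppos : 0 < (r * |Real.sin (θ - φ)|) ^ δ := Real.rpow_pos_of_pos hlowpos δ
    have h1 : u θ ≤ ‖c‖^δ / (r * |Real.sin (θ - φ)|) ^ δ := by
      show ‖c‖^δ / ‖z θ‖^δ ≤ ‖c‖^δ / (r * |Real.sin (θ - φ)|) ^ δ
      apply div_le_div_of_nonneg_left (Real.rpow_nonneg (norm_nonneg c) δ) hrppos hrp
    have h2 : ‖c‖^δ / (r * |Real.sin (θ - φ)|) ^ δ = g θ := by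
      rw [Real.mul_rpow hr.le (abs_nonneg _), hg, hK]
      simp only [sinPow]
      field_simp
    rw [← h2]; exact h1
  have hae_ne : ∀ᵐ θ : ℝ ∂volume, Real.sin (θ - φ) ≠ 0 := by
    rw [MeasureTheory.ae_iff]
    simpa using hnull
  have hae_ub : ∀ᵐ θ : ℝ ∂volume, u θ ≤ g θ := by
    filter_upwards [hae_ne] with θ hθ using hub θ hθ
  -- integrability of g on [0, 2π]
  have hshift : IntervalIntegrable (fun θ => sinPow δ (θ - φ)) volume 0 (2*π) := by
    have hbase : IntervalIntegrable (sinPow δ) volume (-φ) (2*π - φ) :=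
      any_integrable hδ0 hδ1 (by linarith) (by linarith) (by linarith) (by linarith)
    have h := hbase.comp_sub_right φ
    rwa [show -φ + φ = 0 by ring, show 2*π - φ + φ = 2*π by ring] at h
  have hg_int : IntervalIntegrable g volume 0 (2*π) := by
    rw [hg]; exact hshift.const_mul K
  -- integrability of u
  have hu_nonneg : ∀ θ, 0 ≤ u θ := fun θ => by
    apply div_nonneg (Real.rpow_nonneg (norm_nonneg c) δ) (Real.rpow_nonneg (norm_nonneg _) δ)
  have hu_int : IntervalIntegrable u volume 0 (2*π) := by
    rw [intervalIntegrable_iff_integrableOn_Ioc_of_le (by positivity)]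
    rw [intervalIntegrable_iff_integrableOn_Ioc_of_le (by positivity)] at hg_int
    refine Integrable.mono' hg_int meas_u.aestronglyMeasurable.restrict ?_
    refine ae_restrict_of_ae ?_
    filter_upwards [hae_ub] with θ hθ
    rw [Real.norm_eq_abs, abs_of_nonneg (hu_nonneg θ)]
    exact hθ
  -- integrability of log(1+u)
  have hlog_nonneg : ∀ θ, 0 ≤ Real.log (1 + u θ) := fun θ =>
    Real.log_nonneg (by linarith [hu_nonneg θ])
  have hlog_le : ∀ θ, Real.log (1 + u θ) ≤ u θ := fun θ => by
    have := Real.log_le_sub_one_of_pos (by linarith [hu_nonneg θ] : (0:ℝ) < 1 + u θ)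
    linarith
  have hlogu_int : IntervalIntegrable (fun θ => Real.log (1 + u θ)) volume 0 (2*π) := by
    rw [intervalIntegrable_iff_integrableOn_Ioc_of_le (by positivity)]
    have hui := hu_int
    rw [intervalIntegrable_iff_integrableOn_Ioc_of_le (by positivity)] at hui
    refine Integrable.mono' hui
      ((Real.measurable_log.comp (measurable_const.add meas_u)).aestronglyMeasurable.restrict) ?_
    refine ae_restrict_of_ae (ae_of_all _ fun θ => ?_)
    rw [Real.norm_eq_abs, abs_of_nonneg (hlog_nonneg θ)]
    exact hlog_le θ
  -- integrability of f
  have hf_nonneg : ∀ θ, 0 ≤ _root_.posLog ‖1 + c / z θ‖ := fun θ => le_max_left _ _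
  have hf_int : IntervalIntegrable (fun θ => _root_.posLog ‖1 + c / z θ‖) volume 0 (2*π) := by
    rw [intervalIntegrable_iff_integrableOn_Ioc_of_le (by positivity)]
    have hli := hlogu_int.const_mul (1/δ)
    rw [intervalIntegrable_iff_integrableOn_Ioc_of_le (by positivity)] at hli
    refine Integrable.mono' hli meas_f.aestronglyMeasurable.restrict ?_
    refine ae_restrict_of_ae (ae_of_all _ fun θ => ?_)
    rw [Real.norm_eq_abs, abs_of_nonneg (hf_nonneg θ)]
    exact hpoint θ
  -- step A : ∫ f ≤ (1/δ) ∫ log(1+u)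
  have stepA : (∫ θ in (0:ℝ)..(2*π), _root_.posLog ‖1 + c / z θ‖)
      ≤ (1/δ) * ∫ θ in (0:ℝ)..(2*π), Real.log (1 + u θ) := by
    rw [← intervalIntegral.integral_const_mul]
    exact intervalIntegral.integral_mono_on (by positivity) hf_int
      (hlogu_int.const_mul _) (fun θ _ => hpoint θ)
  -- m and tangent line trick
  set Iu : ℝ := ∫ θ in (0:ℝ)..(2*π), u θ with hIu
  set m : ℝ := Iu / (2*π) with hm
  have hIu0 : 0 ≤ Iu := intervalIntegral.integral_nonneg (by positivity) (fun θ _ => hu_nonneg θ)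
  have hm0 : 0 ≤ m := div_nonneg hIu0 (by positivity)
  have h1m : (0:ℝ) < 1 + m := by linarith
  have tangent : ∀ θ, Real.log (1 + u θ) ≤ Real.log (1 + m) + (u θ - m) * (1 + m)⁻¹ := by
    intro θ
    have h1u : (0:ℝ) < 1 + u θ := by linarith [hu_nonneg θ]
    have hlt := Real.log_le_sub_one_of_pos (div_pos h1u h1m)
    rw [Real.log_div h1u.ne' h1m.ne'] at hlt
    have : (1 + u θ) / (1 + m) - 1 = (u θ - m) * (1 + m)⁻¹ := by field_simp; ring
    linarith [this ▸ hlt]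
  have stepB : (∫ θ in (0:ℝ)..(2*π), Real.log (1 + u θ)) ≤ 2*π * Real.log (1 + m) := by
    have hrhs_int : IntervalIntegrable
        (fun θ => Real.log (1 + m) + (u θ - m) * (1 + m)⁻¹) volume 0 (2*π) :=
      ((intervalIntegrable_const)).add ((hu_int.sub (intervalIntegrable_const)).mul_const _)
    have hmono := intervalIntegral.integral_mono_on (by positivity : (0:ℝ) ≤ 2*π)
      hlogu_int hrhs_int (fun θ _ => tangent θ)
    have hval : (∫ θ in (0:ℝ)..(2*π), (Real.log (1 + m) + (u θ - m) * (1 + m)⁻¹))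
        = 2*π * Real.log (1 + m) := by
      rw [intervalIntegral.integral_add (intervalIntegrable_const)
        ((hu_int.sub (intervalIntegrable_const)).mul_const _),
        intervalIntegral.integral_const,
        intervalIntegral.integral_mul_const,
        intervalIntegral.integral_sub hu_int (intervalIntegrable_const),
        intervalIntegral.integral_const]
      rw [← hIu]
      have hz' : Iu - (2*π - 0) • m = 0 := by
        rw [hm, smul_eq_mul, sub_zero]
        field_simp
        ring
      rw [hz', zero_mul, add_zero, smul_eq_mul, sub_zero]
    rw [hval] at hmono
    exact hmono
  -- bounding Iu
  have hIu_le : Iu ≤ K * (2*π/(1-δ)) := by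
    have hmono : Iu ≤ ∫ θ in (0:ℝ)..(2*π), g θ :=
      intervalIntegral.integral_mono_ae (by positivity) hu_int hg_int hae_ub
    have hval : (∫ θ in (0:ℝ)..(2*π), g θ) = K * ∫ x in (0:ℝ)..(2*π), sinPow δ x := by
      rw [hg]
      rw [intervalIntegral.integral_const_mul]
      congr 1
      have hcs := intervalIntegral.integral_comp_sub_right (a := 0) (b := 2*π) (sinPow δ) φ
      rw [hcs, zero_sub]
      have hper2 : Function.Periodic (sinPow δ) (2*π) := by
        have := (sinPow_per δ).int_mul (2:ℤ)
        rwa [show ((2:ℤ):ℝ) * π = 2*π by push_cast; ring] at this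
      have := hper2.intervalIntegral_add_eq (-φ) 0
      rwa [zero_add, show -φ + 2*π = 2*π - φ by ring] at this
    rw [hval] at hmono
    have hJ := full_value hδ0 hδ1
    calc Iu ≤ K * ∫ x in (0:ℝ)..(2*π), sinPow δ x := hmono
      _ ≤ K * (2*π/(1-δ)) := by
          apply mul_le_mul_of_nonneg_left hJ hK0
  set M : ℝ := ‖c‖ ^ δ / ((1 - δ) * r ^ δ) with hM
  have hM0 : 0 ≤ M := by
    apply div_nonneg (Real.rpow_nonneg (norm_nonneg c) δ)
    have : (0:ℝ) < r ^ δ := Real.rpow_pos_of_pos hr δ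
    nlinarith
  have hmM : m ≤ M := by
    rw [hm, hM, hK] at *
    rw [div_le_iff₀ (by positivity : (0:ℝ) < 2*π)]
    calc Iu ≤ ‖c‖^δ / r^δ * (2*π/(1-δ)) := hIu_le
      _ = ‖c‖ ^ δ / ((1 - δ) * r ^ δ) * (2*π) := by
          field_simp
  have hlog_mM : Real.log (1 + m) ≤ Real.log (1 + M) :=
    Real.log_le_log (by linarith) (by linarith)
  have hpos_rhs : _root_.posLog (1 + M) = Real.log (1 + M) :=
    max_eq_right (Real.log_nonneg (by linarith))
  -- final chain
  calc (1 / (2 * π)) * (∫ θ in (0:ℝ)..(2 * π), _root_.posLog ‖1 + c / (r * Complex.exp (θ * Complex.I) - a)‖)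
      = (1 / (2 * π)) * (∫ θ in (0:ℝ)..(2 * π), _root_.posLog ‖1 + c / z θ‖) := rfl
    _ ≤ (1 / (2 * π)) * ((1/δ) * ∫ θ in (0:ℝ)..(2*π), Real.log (1 + u θ)) := by
        apply mul_le_mul_of_nonneg_left stepA (by positivity)
    _ ≤ (1 / (2 * π)) * ((1/δ) * (2*π * Real.log (1 + m))) := by
        apply mul_le_mul_of_nonneg_left _ (by positivity)
        apply mul_le_mul_of_nonneg_left stepB (by positivity)
    _ = (1/δ) * Real.log (1 + m) := by field_simp
    _ ≤ (1/δ) * Real.log (1 + M) := by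
        apply mul_le_mul_of_nonneg_left hlog_mM (by positivity)
    _ = (1 / δ) * _root_.posLog (1 + M) := by rw [hpos_rhs]
end

section
/- For any a ∈ ℂ, any r > 0, and any δ ∈ (0,1), the integral ∫₀^{2π} dθ / |r e^{iθ} − a|^δ is at most 2π/((1−δ) r^δ). -/
open Real MeasureTheory
open intervalIntegral


lemma absRpowII {c : ℝ} (hc : -1 < c) (a b : ℝ) :
    IntervalIntegrable (fun x : ℝ => |x| ^ c) volume a b := by
  suffices h : ∀ s : ℝ, 0 ≤ s → IntervalIntegrable (fun x : ℝ => |x| ^ c) volume 0 s by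
    have h' : ∀ s : ℝ, IntervalIntegrable (fun x : ℝ => |x| ^ c) volume 0 s := by
      intro s
      rcases le_total 0 s with hs | hs
      · exact h s hs
      · have h2 := (IntervalIntegrable.iff_comp_neg enorm_ne_top).mp (h (-s) (by linarith))
        simpa using h2
    exact (h' a).symm.trans (h' b)
  intro s hs
  apply (intervalIntegrable_rpow' hc (a := 0) (b := s)).congr
  rw [Set.uIoc_of_le hs]
  intro x hx
  simp only [abs_of_pos hx.1]

lemma absRpowInt {c : ℝ} (hc : -1 < c) :
    (∫ x in (-π)..π, |x| ^ c) = 2 * π ^ (c+1) / (c+1) := by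
  have h1 : (∫ x in (0:ℝ)..π, |x| ^ c) = π ^ (c+1) / (c+1) := by
    rw [intervalIntegral.integral_congr (g := fun x : ℝ => x ^ c)
      (by intro x hx; rw [Set.uIcc_of_le pi_pos.le] at hx; simp [abs_of_nonneg hx.1]),
      integral_rpow (Or.inl hc), Real.zero_rpow (by linarith)]
    ring
  have h2 : (∫ x in (-π)..(0:ℝ), |x| ^ c) = π ^ (c+1) / (c+1) := by
    have := intervalIntegral.integral_comp_neg (fun x : ℝ => |x| ^ c) (a := 0) (b := π)
    simp only [abs_neg, neg_zero] at this
    rw [← this, h1]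
  rw [← intervalIntegral.integral_add_adjacent_intervals (b := (0:ℝ))
      (absRpowII hc _ _) (absRpowII hc _ _), h1, h2]
  ring


lemma norm_sq_circle (r ρ φ : ℝ) :
    ‖(r:ℂ) * Complex.exp (φ * Complex.I) - ρ‖ ^ 2 = r^2 + ρ^2 - 2*r*ρ*Real.cos φ := by
  rw [Complex.sq_norm, Complex.normSq_apply]
  simp [Complex.exp_ofReal_mul_I_re, Complex.exp_ofReal_mul_I_im]
  nlinarith [Real.sin_sq_add_cos_sq φ]

lemma key_lower (r ρ φ : ℝ) (hr : 0 < r) (hρ : 0 ≤ ρ) (hφ : |φ| ≤ π) :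
    r * |φ| / π ≤ ‖(r:ℂ) * Complex.exp (φ * Complex.I) - ρ‖ := by
  have hc1 := Real.neg_one_le_cos φ
  have hc2 := Real.cos_le_one φ
  -- step 1: squared norm ≥ r^2 (1 - cos φ)/2
  have h1 : r^2 * (1 - Real.cos φ)/2 ≤ r^2 + ρ^2 - 2*r*ρ*Real.cos φ := by
    rcases le_or_gt (-(1/2)) (Real.cos φ) with h | h
    · nlinarith [sq_nonneg (ρ - r * Real.cos φ),
        mul_nonneg (mul_nonneg (sq_nonneg r) (by linarith : (0:ℝ) ≤ 1 - Real.cos φ))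
          (by linarith : (0:ℝ) ≤ Real.cos φ + 1/2)]
    · nlinarith [mul_nonneg (mul_nonneg hr.le hρ) (by linarith : (0:ℝ) ≤ -2*Real.cos φ - 1),
        mul_nonneg (sq_nonneg r) (by linarith : (0:ℝ) ≤ 1 + Real.cos φ), sq_nonneg ρ]
  -- step 2: r^2 (1-cos φ)/2 = (r sin(φ/2))^2
  have h2 : (r * Real.sin (φ/2))^2 = r^2 * (1 - Real.cos φ)/2 := by
    have := Real.sin_sq_eq_half_sub (φ/2)
    rw [mul_pow]
    rw [show 2 * (φ/2) = φ by ring] at this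
    nlinarith []
  -- step 3: |φ|/π ≤ sin(|φ|/2), and sin(|φ|/2)^2 = sin(φ/2)^2
  have h3 : |φ| / π ≤ Real.sin (|φ|/2) := by
    have := Real.mul_le_sin (x := |φ|/2) (by positivity) (by linarith)
    calc |φ| / π = 2/π * (|φ|/2) := by field_simp
    _ ≤ _ := this
  have h4 : (r * (|φ|/π))^2 ≤ (r * Real.sin (φ/2))^2 := by
    have hs : Real.sin (|φ|/2)^2 = Real.sin (φ/2)^2 := by
      rcases abs_choice φ with h | h <;> rw [h] <;> simp [neg_div, Real.sin_neg]
    have hnn : 0 ≤ |φ|/π := by positivity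
    calc (r * (|φ|/π))^2 ≤ (r * Real.sin (|φ|/2))^2 := by
          apply pow_le_pow_left₀ (by positivity)
          exact mul_le_mul_of_nonneg_left h3 hr.le
      _ = (r * Real.sin (φ/2))^2 := by rw [mul_pow, mul_pow, hs]
  have h5 : (r * |φ| / π)^2 ≤ ‖(r:ℂ) * Complex.exp (φ * Complex.I) - ρ‖^2 := by
    rw [norm_sq_circle]
    calc (r * |φ| / π)^2 = (r * (|φ|/π))^2 := by ring_nf
      _ ≤ (r * Real.sin (φ/2))^2 := h4
      _ = _ := h2
      _ ≤ _ := h1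
  exact (pow_le_pow_iff_left₀ (by positivity) (norm_nonneg _) two_ne_zero).mp h5


theorem stmt1 (a : ℂ) (r : ℝ) (hr : 0 < r) (δ : ℝ) (hδ0 : 0 < δ) (hδ1 : δ < 1) :
    (∫ θ in (0:ℝ)..(2 * π), 1 / ‖r * Complex.exp (θ * Complex.I) - a‖ ^ δ) ≤
      2 * π / ((1 - δ) * r ^ δ) := by
  set θ₀ := Complex.arg a with hθ₀
  set ρ := ‖a‖ with hρdef
  have hρ : 0 ≤ ρ := norm_nonneg a
  have ha : (ρ:ℂ) * Complex.exp (θ₀ * Complex.I) = a := Complex.norm_mul_exp_arg_mul_I a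
  set f : ℝ → ℝ := fun θ => 1 / ‖(r:ℂ) * Complex.exp (θ * Complex.I) - a‖ ^ δ with hfdef
  have hf_eq : ∀ θ, f θ = ‖(r:ℂ) * Complex.exp (θ * Complex.I) - a‖ ^ (-δ) := by
    intro θ
    simp only [hfdef]
    rw [Real.rpow_neg (norm_nonneg _), one_div]
  -- periodicity
  have hper : Function.Periodic f (2*π) := by
    intro θ
    simp only [hfdef]
    congr 3
    push_cast
    rw [add_mul, Complex.exp_add]
    rw [show (2:ℂ)*(π:ℂ)*Complex.I = 2*π*Complex.I by ring, Complex.exp_two_pi_mul_I, mul_one]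
  -- factorization
  have hfac : ∀ φ : ℝ, ‖(r:ℂ) * Complex.exp (↑(φ + θ₀) * Complex.I) - a‖
      = ‖(r:ℂ) * Complex.exp (↑φ * Complex.I) - ρ‖ := by
    intro φ
    conv_lhs => rw [← ha]
    rw [show ((↑(φ + θ₀):ℂ) * Complex.I) = ↑φ*Complex.I + ↑θ₀*Complex.I by push_cast; ring,
      Complex.exp_add]
    rw [show (r:ℂ)*(Complex.exp (↑φ*Complex.I) * Complex.exp (↑θ₀*Complex.I))
        - ↑ρ*Complex.exp (↑θ₀*Complex.I)
        = Complex.exp (↑θ₀*Complex.I) * ((r:ℂ)*Complex.exp (↑φ*Complex.I) - ρ) by ring]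
    rw [norm_mul, Complex.norm_exp_ofReal_mul_I, one_mul]
  -- majorant
  set g : ℝ → ℝ := fun φ => (π/r)^δ * |φ| ^ (-δ) with hgdef
  -- pointwise bound for φ ∈ Icc (-π) π, φ ≠ 0
  have hbound : ∀ φ ∈ Set.Icc (-π) π, φ ≠ 0 → f (φ + θ₀) ≤ g φ := by
    intro φ hmem hφ0
    have hφabs : |φ| ≤ π := abs_le.mpr ⟨hmem.1, hmem.2⟩
    have hpos : 0 < r * |φ| / π := by
      have := abs_pos.mpr hφ0; positivity
    have hlow : r * |φ| / π ≤ ‖(r:ℂ) * Complex.exp (↑(φ+θ₀) * Complex.I) - a‖ := by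
      rw [hfac]; exact key_lower r ρ φ hr hρ hφabs
    rw [hf_eq]
    calc ‖(r:ℂ) * Complex.exp (↑(φ+θ₀) * Complex.I) - a‖ ^ (-δ)
        ≤ (r * |φ| / π) ^ (-δ) :=
          Real.rpow_le_rpow_of_nonpos hpos hlow (by linarith)
      _ = g φ := by
          rw [show r * |φ| / π = (r/π) * |φ| by ring,
            Real.mul_rpow (by positivity) (abs_nonneg _)]
          congr 1
          rw [show π / r = (r/π)⁻¹ by rw [inv_div], Real.inv_rpow (by positivity),
            ← Real.rpow_neg (by positivity)]
  -- integrability of majorant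
  have hgint : IntervalIntegrable g volume (-π) π :=
    (absRpowII (by linarith) (-π) π).const_mul _
  -- a.e. facts
  have hae0 : ∀ᵐ φ : ℝ, φ ≠ 0 := by
    rw [MeasureTheory.ae_iff]
    simpa using measure_singleton (0:ℝ)
  -- measurability of shifted f
  have hcontn : Continuous fun φ : ℝ => ‖(r:ℂ) * Complex.exp (↑(φ+θ₀) * Complex.I) - a‖ := by
    fun_prop
  have hmeas : AEStronglyMeasurable (fun φ => f (φ + θ₀))
      (volume.restrict (Set.uIoc (-π) π)) := by
    have hm : Measurable (fun φ => f (φ + θ₀)) := by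
      simp only [hfdef, one_div]
      exact ((hcontn.rpow_const (fun x => Or.inr hδ0.le)).measurable).inv
    exact hm.aestronglyMeasurable
  have hfnonneg : ∀ θ, 0 ≤ f θ := fun θ => by rw [hf_eq]; positivity
  -- integrability of shifted f
  have hfint : IntervalIntegrable (fun φ => f (φ + θ₀)) volume (-π) π := by
    apply hgint.mono_fun hmeas
    rw [Set.uIoc_of_le (by linarith [pi_pos] : -π ≤ π)]
    filter_upwards [ae_restrict_mem measurableSet_Ioc, ae_restrict_of_ae hae0] with φ hmem hφ0
    rw [Real.norm_of_nonneg (hfnonneg _)]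
    calc f (φ + θ₀) ≤ g φ := hbound φ (Set.Ioc_subset_Icc_self hmem) hφ0
      _ ≤ ‖g φ‖ := le_abs_self _
  -- comparison
  have hcomp : (∫ φ in (-π)..π, f (φ + θ₀)) ≤ ∫ φ in (-π)..π, g φ := by
    apply intervalIntegral.integral_mono_ae_restrict (by linarith [pi_pos] : -π ≤ π) hfint hgint
    filter_upwards [ae_restrict_mem measurableSet_Icc, ae_restrict_of_ae hae0] with φ hmem hφ0
    exact hbound φ hmem hφ0
  -- shift identities
  have hshift : (∫ θ in (0:ℝ)..(2*π), f θ) = ∫ θ in (θ₀-π)..(θ₀-π+2*π), f θ := by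
    have := hper.intervalIntegral_add_eq 0 (θ₀ - π)
    simpa using this
  have hsub : (∫ φ in (-π)..π, f (φ + θ₀)) = ∫ θ in (θ₀-π)..(θ₀-π+2*π), f θ := by
    rw [intervalIntegral.integral_comp_add_right f θ₀,
      show -π + θ₀ = θ₀ - π by ring, show π + θ₀ = θ₀ - π + 2*π by ring]
  -- value of majorant integral
  have hgval : (∫ φ in (-π)..π, g φ) = 2 * π / ((1 - δ) * r ^ δ) := by
    rw [hgdef]
    rw [intervalIntegral.integral_const_mul, absRpowInt (by linarith)]
    have hπδ : π ^ δ * π ^ (-δ + 1) = π := by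
      rw [← Real.rpow_add pi_pos]; norm_num
    rw [Real.div_rpow pi_pos.le hr.le]
    have hrδ : (0:ℝ) < r ^ δ := Real.rpow_pos_of_pos hr δ
    have h1δ : (0:ℝ) < 1 - δ := by linarith
    rw [show -δ + 1 = 1 - δ by ring] at hπδ ⊢
    calc π^δ/r^δ * (2*π^(1-δ)/(1-δ)) = 2*(π^δ*π^(1-δ))/((1-δ)*r^δ) := by
          field_simp
      _ = 2*π/((1-δ)*r^δ) := by rw [hπδ]
  calc (∫ θ in (0:ℝ)..(2*π), f θ) = ∫ φ in (-π)..π, f (φ + θ₀) := by rw [hshift, hsub]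
    _ ≤ ∫ φ in (-π)..π, g φ := hcomp
    _ = 2 * π / ((1 - δ) * r ^ δ) := hgval
end

section
/- Cartan's lemma: Let n ≥ 1 and let g_0,…,g_n be linearly independent entire functions with max{|g_0(z)|,…,|g_n(z)|} > 0 for each z ∈ ℂ. Let f_0,…,f_q (q > n) be ℂ-linear combinations of g_0,…,g_n such that any n+1 of the f_j are linearly independent. Then there is a constant A > 0, independent of z, such that for every z ∈ ℂ, if m_0,…,m_q is a permutation of {0,…,q} with |f_{m_0}(z)| ≥ |f_{m_1}(z)| ≥ ⋯ ≥ |f_{m_q}(z)|, then |g_j(z)| ≤ A |f_{m_ν}(z)| for all 0 ≤ j ≤ n and 0 ≤ ν ≤ q−n. In particular, at least q−n+1 of the f_j do not vanish at z. -/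
open scoped Classical in
theorem stmt10 (n q : ℕ) (hn : 1 ≤ n) (hq : n < q)
    (g : Fin (n + 1) → ℂ → ℂ) (hg : ∀ i, Differentiable ℂ (g i))
    (hgi : LinearIndependent ℂ g) (hnz : ∀ z : ℂ, ∃ i, g i z ≠ 0)
    (f : Fin (q + 1) → ℂ → ℂ)
    (hf : ∀ j, f j ∈ Submodule.span ℂ (Set.range g))
    (hind : ∀ S : Finset (Fin (q + 1)), S.card = n + 1 →
      LinearIndependent ℂ (fun j : S => f (j : Fin (q + 1)))) :
    ∃ A : ℝ, 0 < A ∧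
      (∀ z : ℂ, ∀ m : Equiv.Perm (Fin (q + 1)),
        (∀ μ ν : Fin (q + 1), μ ≤ ν → ‖f (m ν) z‖ ≤ ‖f (m μ) z‖) →
        ∀ j : Fin (n + 1), ∀ ν : Fin (q + 1), (ν : ℕ) ≤ q - n →
          ‖g j z‖ ≤ A * ‖f (m ν) z‖) ∧
      (∀ z : ℂ, q - n + 1 ≤ (Finset.univ.filter fun j : Fin (q + 1) => f j z ≠ 0).card) := by
  classical
  set V : Submodule ℂ (ℂ → ℂ) := Submodule.span ℂ (Set.range g) with hV
  -- finrank of V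
  have hfr : Module.finrank ℂ V = n + 1 := by
    simpa using finrank_span_eq_card hgi
  have key : ∀ S : Finset (Fin (q + 1)), ∀ i : Fin (n + 1), ∃ C : ℝ, 0 ≤ C ∧
      (S.card = n + 1 → ∀ z : ℂ, ∀ B : ℝ, (∀ j ∈ S, ‖f j z‖ ≤ B) → ‖g i z‖ ≤ C * B) := by
    intro S i
    by_cases hS : S.card = n + 1
    · haveI : Nonempty ↥S := by
        rw [Finset.nonempty_coe_sort]
        exact Finset.card_pos.mp (by omega)
      set f' : ↥S → V := fun j => ⟨f (j : Fin (q + 1)), hf _⟩ with hf'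
      have hli : LinearIndependent ℂ f' := by
        apply LinearIndependent.of_comp V.subtype
        exact hind S hS
      have hcard : Fintype.card ↥S = Module.finrank ℂ V := by
        rw [Fintype.card_coe, hS, hfr]
      set b : Module.Basis ↥S ℂ V := basisOfLinearIndependentOfCardEqFinrank hli hcard with hb
      have hbe : ⇑b = f' := coe_basisOfLinearIndependentOfCardEqFinrank hli hcard
      set gi : V := ⟨g i, Submodule.subset_span (Set.mem_range_self i)⟩ with hgiV
      set c : ↥S → ℂ := fun j => b.repr gi j with hc
      have hrepr : ∑ j : ↥S, c j • f' j = gi := by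
        rw [hc, ← hbe]
        exact b.sum_repr gi
      have hfun : g i = ∑ j : ↥S, c j • f ↑j := by
        have := congrArg (V.subtype) hrepr
        simpa using this.symm
      refine ⟨∑ j : ↥S, ‖c j‖, Finset.sum_nonneg fun j _ => norm_nonneg _, fun _ z B hB => ?_⟩
      have hz : g i z = ∑ j : ↥S, c j * f ↑j z := by
        rw [hfun]
        simp [Finset.sum_apply]
      rw [hz, Finset.sum_mul]
      refine (norm_sum_le _ _).trans (Finset.sum_le_sum fun j _ => ?_)
      rw [norm_mul]
      exact mul_le_mul_of_nonneg_left (hB _ j.2) (norm_nonneg _)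
    · exact ⟨0, le_refl 0, fun h => absurd h hS⟩
  choose C hC0 hC using key
  set A : ℝ := 1 + Finset.univ.sup' (Finset.univ_nonempty)
      (fun p : Finset (Fin (q + 1)) × Fin (n + 1) => C p.1 p.2) with hA
  have hCA : ∀ S i, C S i ≤ A := by
    intro S i
    have : C S i ≤ Finset.univ.sup' (Finset.univ_nonempty)
        (fun p : Finset (Fin (q + 1)) × Fin (n + 1) => C p.1 p.2) :=
      Finset.le_sup' (fun p : Finset (Fin (q + 1)) × Fin (n + 1) => C p.1 p.2)
        (Finset.mem_univ (S, i))
    linarith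
  have hA0 : 0 < A := by
    have h1 := hC0 ∅ (0 : Fin (n + 1))
    have h2 : C ∅ (0 : Fin (n + 1)) ≤ Finset.univ.sup' (Finset.univ_nonempty)
        (fun p : Finset (Fin (q + 1)) × Fin (n + 1) => C p.1 p.2) :=
      Finset.le_sup' (fun p : Finset (Fin (q + 1)) × Fin (n + 1) => C p.1 p.2)
        (Finset.mem_univ (∅, (0 : Fin (n + 1))))
    rw [hA]; linarith
  refine ⟨A, hA0, ?_, ?_⟩
  · intro z m hm j ν hν
    set ι : Fin (n + 1) → Fin (q + 1) := fun k => m ⟨(ν : ℕ) + k, by omega⟩ with hι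
    have hinj : Function.Injective ι := by
      intro a b hab
      have := m.injective hab
      have : (ν : ℕ) + a = (ν : ℕ) + b := congrArg Fin.val this
      exact Fin.ext (by omega)
    set S : Finset (Fin (q + 1)) := Finset.univ.image ι with hSdef
    have hScard : S.card = n + 1 := by
      rw [hSdef, Finset.card_image_of_injective _ hinj, Finset.card_univ, Fintype.card_fin]
    have hbound : ∀ j' ∈ S, ‖f j' z‖ ≤ ‖f (m ν) z‖ := by
      intro j' hj'
      rw [hSdef, Finset.mem_image] at hj'
      obtain ⟨k, _, rfl⟩ := hj'
      exact hm ν _ (by rw [Fin.le_def]; simp)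
    calc ‖g j z‖ ≤ C S j * ‖f (m ν) z‖ := hC S j hScard z _ hbound
      _ ≤ A * ‖f (m ν) z‖ := mul_le_mul_of_nonneg_right (hCA S j) (norm_nonneg _)
  · intro z
    set Z : Finset (Fin (q + 1)) := Finset.univ.filter (fun j => f j z = 0) with hZ
    have hZcard : Z.card ≤ n := by
      by_contra h
      push_neg at h
      obtain ⟨S, hSsub, hScard⟩ := Finset.exists_subset_card_eq (by omega : n + 1 ≤ Z.card)
      obtain ⟨i, hi⟩ := hnz z
      have : ‖g i z‖ ≤ C S i * 0 := by
        apply hC S i hScard z 0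
        intro j hj
        have := hSsub hj
        rw [hZ, Finset.mem_filter] at this
        simp [this.2]
      rw [mul_zero] at this
      exact hi (norm_le_zero_iff.mp this)
    have := Finset.card_filter_add_card_filter_not (s := Finset.univ)
      (p := fun j : Fin (q + 1) => f j z = 0)
    simp only [Finset.card_univ, Fintype.card_fin] at this
    have : Z.card + (Finset.univ.filter fun j : Fin (q + 1) => ¬ f j z = 0).card = q + 1 := this
    simp only [ne_eq]
    omega
end

section
/- Chebotarev-type lemma (Evans–Isaacs): Let m be a prime and ε a primitive m-th root of unity in a field of characteristic zero. Suppose a_1,…,a_μ ∈ ℤ are pairwise incongruent mod m and b_1,…,b_μ ∈ ℤ are pairwise incongruent mod m. Then det( (ε^{a_i b_j})_{1≤i,j≤μ} ) ≠ 0. -/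
open Polynomial

-- Key number theory lemma: P ∈ ℤ[X], P(ε)=0, ε primitive m-th root (m prime) ⇒ m ∣ P(1)
lemma cheb_dvd_eval_one (F : Type*) [Field F] [CharZero F] (m : ℕ) (hm : m.Prime)
    (ε : F) (hε : IsPrimitiveRoot ε m) (P : Polynomial ℤ)
    (hP : Polynomial.aeval ε P = 0) : (m : ℤ) ∣ P.eval 1 := by
  haveI : Fact m.Prime := ⟨hm⟩
  have h0 : 0 < m := hm.pos
  have h1 : Polynomial.aeval ε (P.map (algebraMap ℤ ℚ)) = 0 := by
    rw [Polynomial.aeval_map_algebraMap]; exact hP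
  have hdvd : Polynomial.cyclotomic m ℚ ∣ P.map (algebraMap ℤ ℚ) := by
    rw [Polynomial.cyclotomic_eq_minpoly_rat hε h0]
    exact minpoly.dvd ℚ ε h1
  have hdvdZ : Polynomial.cyclotomic m ℤ ∣ P := by
    have hinj : Function.Injective (algebraMap ℤ ℚ) := fun x y h => by exact_mod_cast h
    rw [← Polynomial.map_dvd_map (algebraMap ℤ ℚ) hinj (Polynomial.cyclotomic.monic m ℤ)]
    rwa [Polynomial.map_cyclotomic]
  obtain ⟨g, hg⟩ := hdvdZ
  rw [hg, Polynomial.eval_mul, Polynomial.eval_one_cyclotomic_prime]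
  exact Dvd.intro _ rfl

noncomputable def chebQ (k : ℕ) : ℚ[X] := Polynomial.C ((k.factorial : ℚ)⁻¹) * descPochhammer ℚ k

lemma chebQ_natDegree_le (k : ℕ) : (chebQ k).natDegree ≤ k := by
  refine le_trans (Polynomial.natDegree_C_mul_le _ _) ?_
  rw [descPochhammer_natDegree]

lemma chebQ_eval (n k : ℕ) : (chebQ k).eval (n : ℚ) = n.choose k := by
  rw [chebQ, Polynomial.eval_mul, Polynomial.eval_C, descPochhammer_eval_eq_descFactorial,
    Nat.descFactorial_eq_factorial_mul_choose]
  push_cast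
  rw [← mul_assoc, inv_mul_cancel₀ (by exact_mod_cast k.factorial_ne_zero), one_mul]

lemma chebQ_coeff_eq_zero {l k : ℕ} (h : k < l) : (chebQ k).coeff l = 0 :=
  Polynomial.coeff_eq_zero_of_natDegree_lt (lt_of_le_of_lt (chebQ_natDegree_le k) h)

lemma chebQ_coeff_self (l : ℕ) : (chebQ l).coeff l = ((l.factorial : ℚ))⁻¹ := by
  rw [chebQ, Polynomial.coeff_C_mul]
  have h1 : (descPochhammer ℚ l).coeff l = 1 := by
    have := (monic_descPochhammer ℚ l).coeff_natDegree
    rwa [descPochhammer_natDegree] at this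
  rw [h1, mul_one]

noncomputable def chebF (K' l : ℕ) : ℚ[X] :=
  ∑ k ∈ Finset.range K', Polynomial.C ((chebQ k).coeff l) * Polynomial.X ^ k

lemma X_pow_dvd_chebF (K' l : ℕ) : (Polynomial.X : ℚ[X]) ^ l ∣ chebF K' l := by
  refine Finset.dvd_sum (fun k _ => ?_)
  rcases le_or_gt l k with h | h
  · exact dvd_mul_of_dvd_right (pow_dvd_pow _ h) _
  · rw [chebQ_coeff_eq_zero h, map_zero, zero_mul]
    exact dvd_zero _

lemma chebF_coeff_self {K' l : ℕ} (h : l < K') :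
    (chebF K' l).coeff l = ((l.factorial : ℚ))⁻¹ := by
  rw [chebF, Polynomial.finset_sum_coeff]
  rw [Finset.sum_eq_single l]
  · rw [Polynomial.coeff_C_mul, Polynomial.coeff_X_pow, if_pos rfl, mul_one, chebQ_coeff_self]
  · intro k _ hk
    rw [Polynomial.coeff_C_mul, Polynomial.coeff_X_pow, if_neg (fun hh => hk hh.symm), mul_zero]
  · intro hl; exact absurd (Finset.mem_range.mpr h) hl

-- entry expansion
lemma chebF_entry {K' n : ℕ} (hn : n < K') :
    ((1 : ℚ[X]) + Polynomial.X) ^ n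
      = ∑ l ∈ Finset.range K', Polynomial.C ((n : ℚ) ^ l) * chebF K' l := by
  have swap : ∑ l ∈ Finset.range K', Polynomial.C ((n : ℚ) ^ l) * chebF K' l
      = ∑ k ∈ Finset.range K',
          Polynomial.C (∑ l ∈ Finset.range K', (chebQ k).coeff l * (n : ℚ) ^ l)
            * Polynomial.X ^ k := by
    unfold chebF
    simp_rw [Finset.mul_sum, map_sum, Finset.sum_mul]
    rw [Finset.sum_comm]
    refine Finset.sum_congr rfl fun k _ => Finset.sum_congr rfl fun l _ => by rw [map_mul]; ring
  rw [swap]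
  have heval : ∀ k ∈ Finset.range K',
      Polynomial.C (∑ l ∈ Finset.range K', (chebQ k).coeff l * (n : ℚ) ^ l) * Polynomial.X ^ k
      = Polynomial.C ((n.choose k : ℚ)) * Polynomial.X ^ k := by
    intro k hk
    rw [← Polynomial.eval_eq_sum_range' (lt_of_le_of_lt (chebQ_natDegree_le k)
      (Finset.mem_range.mp hk)), chebQ_eval]
  rw [Finset.sum_congr rfl heval]
  have hbin : ((1 : ℚ[X]) + Polynomial.X) ^ n
      = ∑ k ∈ Finset.range (n + 1), Polynomial.C ((n.choose k : ℚ)) * Polynomial.X ^ k := by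
    rw [add_comm]
    rw [add_pow]
    refine Finset.sum_congr rfl fun k hk => ?_
    rw [one_pow, mul_one, Polynomial.C_eq_natCast, mul_comm]
  rw [hbin]
  refine Finset.sum_subset (by intro x hx; rw [Finset.mem_range] at *; omega) ?_
  intro k _ hk
  rw [Finset.mem_range, not_lt] at hk
  rw [Nat.choose_eq_zero_of_lt (by omega), Nat.cast_zero, map_zero, zero_mul]

lemma cheb_prod_struct {ι : Type*} [DecidableEq ι] (s : Finset ι) (g : ι → ℚ[X]) (l : ι → ℕ)
    (h : ∀ i ∈ s, (Polynomial.X : ℚ[X]) ^ (l i) ∣ g i) :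
    ∃ P : ℚ[X], (∏ i ∈ s, g i) = Polynomial.X ^ (∑ i ∈ s, l i) * P
      ∧ P.coeff 0 = ∏ i ∈ s, (g i).coeff (l i) := by
  induction s using Finset.induction_on with
  | empty => exact ⟨1, by simp⟩
  | @insert a s ha ih =>
    obtain ⟨P, hP, hP0⟩ := ih (fun i hi => h i (Finset.mem_insert_of_mem hi))
    obtain ⟨w, hw⟩ := h a (Finset.mem_insert_self a s)
    refine ⟨w * P, ?_, ?_⟩
    · rw [Finset.prod_insert ha, Finset.sum_insert ha, hP, hw]; ring
    · rw [Finset.prod_insert ha, Polynomial.mul_coeff_zero, hP0, hw]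
      congr 1
      have := Polynomial.coeff_X_pow_mul w (l a) 0
      rw [zero_add] at this
      rw [this]

lemma cheb_strictMono_le {μ : ℕ} (f : Fin μ → ℕ) (hf : StrictMono f) :
    ∀ k (h : k < μ), k ≤ f ⟨k, h⟩ := by
  intro k
  induction k with
  | zero => intro h; exact Nat.zero_le _
  | succ n ih =>
    intro h
    have h1 : f ⟨n, by omega⟩ < f ⟨n+1, h⟩ := hf (by simp [Fin.lt_def])
    have h2 := ih (by omega)
    omega

lemma cheb_sum_ge {μ : ℕ} (g : Fin μ → ℕ) (hg : Function.Injective g) :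
    (∑ i : Fin μ, (i : ℕ)) ≤ ∑ i, g i ∧
      ((∑ i, g i = ∑ i : Fin μ, (i : ℕ)) → ∀ i, g i < μ) := by
  classical
  set s : Finset ℕ := Finset.univ.image g with hs
  have hcard : s.card = μ := by
    rw [hs, Finset.card_image_of_injective _ hg, Finset.card_univ, Fintype.card_fin]
  set e := s.orderIsoOfFin hcard with he
  set f : Fin μ → ℕ := fun i => (e i : ℕ) with hf
  have hfmono : StrictMono f := fun i j hij => by
    simpa [hf] using (OrderIso.lt_iff_lt e).mpr hij
  have hle : ∀ i : Fin μ, (i : ℕ) ≤ f i := fun i => by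
    have := cheb_strictMono_le f hfmono i i.isLt
    simpa using this
  have hsum : ∑ i, g i = ∑ i, f i := by
    have hA : ∑ x ∈ s, x = ∑ i, g i := by
      rw [hs]
      exact Finset.sum_image (by intro x _ y _ h; exact hg h)
    have hB : ∑ x ∈ s, x = ∑ i, f i := by
      rw [← Finset.sum_coe_sort s (fun x => (x : ℕ))]
      exact (Fintype.sum_equiv e.toEquiv f (fun x => (x : ℕ)) (fun i => rfl)).symm
    rw [← hA, hB]
  constructor
  · rw [hsum]; exact Finset.sum_le_sum fun i _ => hle i
  · intro heq i
    have hall : ∀ j : Fin μ, f j = (j : ℕ) := by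
      have h2 : ∑ j, f j = ∑ j : Fin μ, (j : ℕ) := by rw [← hsum, heq]
      intro j
      by_contra hne
      have hlt : (j : ℕ) < f j := lt_of_le_of_ne (hle j) (Ne.symm hne)
      have : ∑ j : Fin μ, (j : ℕ) < ∑ j, f j :=
        Finset.sum_lt_sum (fun k _ => hle k) ⟨j, Finset.mem_univ j, hlt⟩
      omega
    have hgi : g i ∈ s := by rw [hs]; exact Finset.mem_image_of_mem g (Finset.mem_univ i)
    obtain ⟨k, hk⟩ := e.surjective ⟨g i, hgi⟩
    have hgk : g i = f k := (congrArg Subtype.val hk).symm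
    rw [hgk, hall k]
    exact k.isLt

lemma cheb_det_main {μ K' : ℕ} (A B : Fin μ → ℕ)
    (hAB : ∀ i j, A i * B j < K') (hμ : μ ≤ K') :
    (Polynomial.X : ℚ[X]) ^ (∑ i : Fin μ, (i : ℕ)) ∣
        (Matrix.of fun i j : Fin μ => ((1:ℚ[X]) + Polynomial.X) ^ (A i * B j)).det ∧
    ((Matrix.of fun i j : Fin μ => ((1:ℚ[X]) + Polynomial.X) ^ (A i * B j)).det).coeff
        (∑ i : Fin μ, (i : ℕ))
      = (∏ i : Fin μ, (((i:ℕ).factorial : ℚ)))⁻¹ *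
        ((Matrix.vandermonde fun i => (A i : ℚ)).det
          * (Matrix.vandermonde fun i => (B i : ℚ)).det) := by
  classical
  set N := ∑ i : Fin μ, (i : ℕ) with hN
  set Mq : Matrix (Fin μ) (Fin μ) ℚ[X] :=
    Matrix.of fun i j : Fin μ => ((1:ℚ[X]) + Polynomial.X) ^ (A i * B j) with hMq
  set v : Fin K' → (Fin μ → ℚ[X]) :=
    fun l j => Polynomial.C ((B j : ℚ) ^ (l : ℕ)) with hv
  set c : Fin μ → Fin K' → ℚ[X] :=
    fun i l => Polynomial.C ((A i : ℚ) ^ (l : ℕ)) * chebF K' (l : ℕ) with hc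
  -- rows decomposition
  have hrow : ∀ i, Mq i = ∑ l : Fin K', c i l • v l := by
    intro i
    funext j
    rw [Finset.sum_apply]
    show ((1:ℚ[X]) + Polynomial.X) ^ (A i * B j) = _
    rw [chebF_entry (hAB i j)]
    rw [← Fin.sum_univ_eq_sum_range (fun l => Polynomial.C (((A i * B j : ℕ) : ℚ) ^ l) * chebF K' l) K']
    refine Finset.sum_congr rfl fun l _ => ?_
    show Polynomial.C (((A i * B j : ℕ) : ℚ) ^ (l:ℕ)) * chebF K' (l:ℕ)
        = (Polynomial.C ((A i : ℚ) ^ (l : ℕ)) * chebF K' (l : ℕ)) * Polynomial.C ((B j : ℚ) ^ (l : ℕ))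
    push_cast
    rw [mul_pow, map_mul]
    ring
  -- determinant as sum over r
  have hdet : Mq.det = ∑ r : Fin μ → Fin K',
      (∏ i, c i (r i)) * Polynomial.C ((Matrix.of fun i j => (B j : ℚ) ^ ((r i : ℕ))).det) := by
    have h1 : Mq.det = Matrix.detRowAlternating Mq := rfl
    have h2 : (Mq : Fin μ → Fin μ → ℚ[X]) = fun i => ∑ l : Fin K', c i l • v l := funext hrow
    rw [h1, h2]
    have h3 := (Matrix.detRowAlternating (R := ℚ[X]) (n := Fin μ)).toMultilinearMap.map_sum
      (g := fun (i : Fin μ) (l : Fin K') => c i l • v l)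
    simp only [AlternatingMap.coe_multilinearMap] at h3
    rw [h3]
    refine Finset.sum_congr rfl fun r _ => ?_
    have h4 := (Matrix.detRowAlternating (R := ℚ[X]) (n := Fin μ)).toMultilinearMap.map_smul_univ
        (fun i => c i (r i)) (fun i => v (r i))
    simp only [AlternatingMap.coe_multilinearMap] at h4
    rw [h4, smul_eq_mul]
    congr 1
    exact ((RingHom.map_det (Polynomial.C : ℚ →+* ℚ[X]) _).symm)
  -- abbreviations
  set W : (Fin μ → Fin K') → Matrix (Fin μ) (Fin μ) ℚ :=
    fun r => Matrix.of fun i j => (B j : ℚ) ^ ((r i : ℕ)) with hW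
  set T : (Fin μ → Fin K') → ℚ[X] :=
    fun r => (∏ i, c i (r i)) * Polynomial.C ((W r).det) with hT
  have hdet' : Mq.det = ∑ r : Fin μ → Fin K', T r := hdet
  -- non-injective terms vanish
  have hT0 : ∀ r, ¬ Function.Injective r → T r = 0 := by
    intro r hr
    rw [Function.not_injective_iff] at hr
    obtain ⟨i, i', hri, hii⟩ := hr
    have hWr : (W r).det = 0 := by
      refine Matrix.det_zero_of_row_eq hii ?_
      funext j
      show (B j : ℚ) ^ ((r i : ℕ)) = (B j : ℚ) ^ ((r i' : ℕ))
      rw [hri]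
    show (∏ i, c i (r i)) * Polynomial.C ((W r).det) = 0
    rw [hWr, map_zero, mul_zero]
  -- structure of injective terms
  have hstruct : ∀ r : Fin μ → Fin K', ∃ P : ℚ[X],
      (∏ i, c i (r i)) = Polynomial.X ^ (∑ i, (r i : ℕ)) * P
        ∧ P.coeff 0 = ∏ i, (c i (r i)).coeff ((r i : ℕ)) := by
    intro r
    exact cheb_prod_struct Finset.univ (fun i => c i (r i)) (fun i => (r i : ℕ))
      (fun i _ => (X_pow_dvd_chebF K' ((r i : ℕ))).mul_left _)
  have hSge : ∀ r : Fin μ → Fin K', Function.Injective r → N ≤ ∑ i, (r i : ℕ) := by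
    intro r hr
    exact (cheb_sum_ge (fun i => (r i : ℕ)) (fun x y hxy => hr (Fin.val_injective hxy))).1
  have hdvdT : ∀ r : Fin μ → Fin K', Polynomial.X ^ (∑ i, (r i : ℕ)) ∣ T r := by
    intro r
    obtain ⟨P, hP, _⟩ := hstruct r
    rw [hT]
    show Polynomial.X ^ (∑ i, (r i : ℕ)) ∣ (∏ i, c i (r i)) * _
    rw [hP, mul_assoc]
    exact Dvd.intro _ rfl
  constructor
  · -- part (a)
    rw [hdet']
    refine Finset.dvd_sum fun r _ => ?_
    by_cases hr : Function.Injective r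
    · exact dvd_trans (pow_dvd_pow _ (hSge r hr)) (hdvdT r)
    · rw [hT0 r hr]; exact dvd_zero _
  · -- part (b)
    rw [hdet', Polynomial.finset_sum_coeff]
    set ι : Equiv.Perm (Fin μ) → (Fin μ → Fin K') := fun σ i => Fin.castLE hμ (σ i) with hι
    have hιinj : Function.Injective ι := by
      intro σ τ h
      ext i
      have h1 := congrFun h i
      simp only [hι, Fin.castLE_inj] at h1
      rw [h1]
    have hvanish : ∀ r ∈ (Finset.univ : Finset (Fin μ → Fin K')),
        r ∉ Finset.univ.image ι → (T r).coeff N = 0 := by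
      intro r _ hr
      by_cases hrinj : Function.Injective r
      · have hne : ∑ i, (r i : ℕ) ≠ N := by
          intro heq
          have hlt := (cheb_sum_ge (fun i => (r i : ℕ))
            (fun x y hxy => hrinj (Fin.val_injective hxy))).2 heq
          set σ' : Fin μ → Fin μ := fun i => ⟨(r i : ℕ), hlt i⟩ with hσ'
          have hσinj : Function.Injective σ' := by
            intro x y hxy
            simp only [hσ', Fin.mk.injEq] at hxy
            exact hrinj (Fin.val_injective hxy)
          have hbij := Finite.injective_iff_bijective.mp hσinj
          refine hr (Finset.mem_image.mpr ⟨Equiv.ofBijective σ' hbij, Finset.mem_univ _, ?_⟩)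
          funext i
          exact Fin.ext (by simp [hι, hσ', Equiv.ofBijective_apply])
        have hgt : N < ∑ i, (r i : ℕ) := lt_of_le_of_ne (hSge r hrinj) (Ne.symm hne)
        exact Polynomial.X_pow_dvd_iff.mp (hdvdT r) N hgt
      · rw [hT0 r hrinj, Polynomial.coeff_zero]
    rw [← Finset.sum_subset (Finset.subset_univ (Finset.univ.image ι)) hvanish]
    rw [Finset.sum_image (fun x _ y _ h => hιinj h)]
    -- now compute each permutation term
    have hterm : ∀ σ : Equiv.Perm (Fin μ), (T (ι σ)).coeff N
        = ((∏ i : Fin μ, (((i:ℕ).factorial : ℚ)))⁻¹ * (Matrix.vandermonde fun i => (B i : ℚ)).det)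
          * ((Equiv.Perm.sign σ : ℤ) * ∏ i, (A i : ℚ) ^ ((σ i : ℕ))) := by
      intro σ
      have hcoe : ∀ i, ((ι σ i : ℕ)) = ((σ i : ℕ)) := fun i => rfl
      have hS : ∑ i, ((ι σ i : ℕ)) = N := by
        simp only [hcoe]
        exact Equiv.sum_comp σ (fun i => (i : ℕ))
      obtain ⟨P, hP, hP0⟩ := hstruct (ι σ)
      have hTeq : T (ι σ) = Polynomial.X ^ N * (P * Polynomial.C ((W (ι σ)).det)) := by
        rw [hT]
        show (∏ i, c i (ι σ i)) * _ = _
        rw [hP, hS, mul_assoc]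
      rw [hTeq]
      have h5 := Polynomial.coeff_X_pow_mul (P * Polynomial.C ((W (ι σ)).det)) N 0
      rw [zero_add] at h5
      rw [h5, Polynomial.mul_coeff_zero, Polynomial.coeff_C_zero, hP0]
      -- coefficient product
      have hc2 : ∀ i, (c i (ι σ i)).coeff ((ι σ i : ℕ))
          = (A i : ℚ) ^ ((σ i : ℕ)) * (((σ i : ℕ).factorial : ℚ))⁻¹ := by
        intro i
        show (Polynomial.C ((A i : ℚ) ^ ((ι σ i : ℕ))) * chebF K' ((ι σ i : ℕ))).coeff _ = _
        rw [Polynomial.coeff_C_mul]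
        simp only [hcoe]
        rw [chebF_coeff_self (lt_of_lt_of_le (σ i).isLt hμ)]
      rw [Finset.prod_congr rfl (fun i _ => hc2 i), Finset.prod_mul_distrib]
      have hfact : (∏ i, (((σ i : ℕ).factorial : ℚ))⁻¹)
          = (∏ i : Fin μ, (((i:ℕ).factorial : ℚ)))⁻¹ := by
        rw [← Finset.prod_inv_distrib]
        exact Equiv.prod_comp σ (fun i => (((i:ℕ).factorial : ℚ))⁻¹)
      -- determinant of permuted vandermonde
      have hWσ : (W (ι σ)).det
          = (Equiv.Perm.sign σ : ℤ) * (Matrix.vandermonde fun i => (B i : ℚ)).det := by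
        have : W (ι σ) = ((Matrix.vandermonde fun i => (B i : ℚ)).transpose).submatrix σ id := by
          ext i j
          show (B j : ℚ) ^ ((ι σ i : ℕ)) = _
          simp only [hcoe, Matrix.submatrix_apply, Matrix.transpose_apply,
            Matrix.vandermonde_apply, id]
        rw [this, Matrix.det_permute, Matrix.det_transpose]
      rw [hfact, hWσ]
      ring
    rw [Finset.sum_congr rfl (fun σ _ => hterm σ), ← Finset.mul_sum]
    have hVA : ∑ σ : Equiv.Perm (Fin μ),
        ((Equiv.Perm.sign σ : ℤ) : ℚ) * ∏ i, (A i : ℚ) ^ ((σ i : ℕ))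
        = (Matrix.vandermonde fun i => (A i : ℚ)).det := by
      rw [← Matrix.det_transpose (Matrix.vandermonde fun i => (A i : ℚ)), Matrix.det_apply]
      refine Finset.sum_congr rfl fun σ _ => ?_
      rw [Units.smul_def, zsmul_eq_mul]
      congr 1
    rw [hVA]
    ring

theorem stmt12 (F : Type*) [Field F] [CharZero F] (m : ℕ) (hm : m.Prime)
    (ε : F) (hε : IsPrimitiveRoot ε m)
    (μ : ℕ) (a b : Fin μ → ℤ)
    (ha : ∀ i j : Fin μ, i ≠ j → ¬ a i ≡ a j [ZMOD (m : ℤ)])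
    (hb : ∀ i j : Fin μ, i ≠ j → ¬ b i ≡ b j [ZMOD (m : ℤ)]) :
    Matrix.det (Matrix.of fun i j : Fin μ => ε ^ (a i * b j)) ≠ 0 := by
  classical
  have hm0 : (0:ℤ) < (m:ℤ) := by exact_mod_cast hm.pos
  have hεne : ε ≠ 0 := hε.ne_zero hm.ne_zero
  have hε1 : ε ≠ 1 := hε.ne_one hm.one_lt
  set A : Fin μ → ℕ := fun i => (a i % m).toNat with hA
  set B : Fin μ → ℕ := fun j => (b j % m).toNat with hB
  have hAcast : ∀ i, (A i : ℤ) = a i % m := fun i =>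
    Int.toNat_of_nonneg (Int.emod_nonneg _ (ne_of_gt hm0))
  have hBcast : ∀ j, (B j : ℤ) = b j % m := fun j =>
    Int.toNat_of_nonneg (Int.emod_nonneg _ (ne_of_gt hm0))
  have hAlt : ∀ i, A i < m := fun i => by
    have := Int.emod_lt_of_pos (a i) hm0
    have h2 := hAcast i
    omega
  have hBlt : ∀ j, B j < m := fun j => by
    have := Int.emod_lt_of_pos (b j) hm0
    have h2 := hBcast j
    omega
  have hAmod : ∀ i, a i ≡ (A i : ℤ) [ZMOD (m : ℤ)] := fun i => by
    rw [hAcast i]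
    exact (Int.emod_emod_of_dvd _ dvd_rfl).symm
  have hBmod : ∀ j, b j ≡ (B j : ℤ) [ZMOD (m : ℤ)] := fun j => by
    rw [hBcast j]
    exact (Int.emod_emod_of_dvd _ dvd_rfl).symm
  have hAinj : Function.Injective A := by
    intro i j hij
    by_contra hne
    exact ha i j hne (((hAmod i).trans (by rw [hij])).trans (hAmod j).symm)
  have hBinj : Function.Injective B := by
    intro i j hij
    by_contra hne
    exact hb i j hne (((hBmod i).trans (by rw [hij])).trans (hBmod j).symm)
  have hμm : μ ≤ m := by
    have : Function.Injective (fun i : Fin μ => (⟨A i, hAlt i⟩ : Fin m)) := by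
      intro i j hij
      exact hAinj (congrArg Fin.val hij)
    simpa using Fintype.card_le_of_injective _ this
  set K' : ℕ := m * m with hK'
  have hAB : ∀ i j, A i * B j < K' := fun i j =>
    Nat.mul_lt_mul_of_lt_of_lt (hAlt i) (hBlt j)
  have hμK : μ ≤ K' := le_trans hμm (Nat.le_mul_of_pos_left m hm.pos)
  set N : ℕ := ∑ i : Fin μ, (i : ℕ) with hN
  set EZ : ℤ[X] := (Matrix.of fun i j : Fin μ => ((1:ℤ[X]) + Polynomial.X) ^ (A i * B j)).det
    with hEZ
  -- relate EZ to the ℚ[X] determinant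
  have hmapE : EZ.map (Int.castRingHom ℚ)
      = (Matrix.of fun i j : Fin μ => ((1:ℚ[X]) + Polynomial.X) ^ (A i * B j)).det := by
    show (Polynomial.mapRingHom (Int.castRingHom ℚ)) EZ = _
    rw [hEZ, RingHom.map_det]
    congr 1
    refine Matrix.ext fun i j => ?_
    show Polynomial.map (Int.castRingHom ℚ) (((1:ℤ[X]) + Polynomial.X) ^ (A i * B j)) = _
    simp [Polynomial.map_pow]
  obtain ⟨hdvdQ, hcoefQ⟩ := cheb_det_main A B hAB hμK
  rw [← hmapE] at hdvdQ hcoefQ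
  -- X^N divides EZ
  have hdvdZ : (Polynomial.X : ℤ[X]) ^ N ∣ EZ := by
    rw [Polynomial.X_pow_dvd_iff]
    intro d hd
    have h1 := Polynomial.X_pow_dvd_iff.mp hdvdQ d hd
    rw [Polynomial.coeff_map] at h1
    have h2 : ((EZ.coeff d : ℤ) : ℚ) = 0 := h1
    exact_mod_cast h2
  obtain ⟨G, hG⟩ := hdvdZ
  have hGcoeff : EZ.coeff N = G.coeff 0 := by
    rw [hG]
    have := Polynomial.coeff_X_pow_mul G N 0
    rw [zero_add] at this
    rw [this]
  -- integer value equation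
  set VAZ : ℤ := (Matrix.vandermonde fun i => (A i : ℤ)).det with hVAZ
  set VBZ : ℤ := (Matrix.vandermonde fun i => (B i : ℤ)).det with hVBZ
  set cZ : ℤ := ∏ i : Fin μ, (((i:ℕ).factorial : ℤ)) with hcZ
  have hvalue : cZ * EZ.coeff N = VAZ * VBZ := by
    have hcast : ∀ (v : Fin μ → ℕ), (((Matrix.vandermonde fun i => ((v i : ℕ) : ℤ)).det : ℤ) : ℚ)
        = (Matrix.vandermonde fun i => ((v i : ℕ) : ℚ)).det := by
      intro v
      have h1 : (((Matrix.vandermonde fun i => ((v i : ℕ) : ℤ)).det : ℤ) : ℚ)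
          = ((Int.castRingHom ℚ).mapMatrix (Matrix.vandermonde fun i => ((v i : ℕ) : ℤ))).det :=
        RingHom.map_det (Int.castRingHom ℚ) _
      rw [h1]
      congr 1
      ext i j
      show (((Matrix.vandermonde (fun i => ((v i : ℕ) : ℤ))) i j : ℤ) : ℚ) = _
      simp [Matrix.vandermonde_apply]
    have hq : (EZ.coeff N : ℚ) = (∏ i : Fin μ, (((i:ℕ).factorial : ℚ)))⁻¹ * (VAZ * VBZ) := by
      have h2 : ((EZ.coeff N : ℤ) : ℚ) = (EZ.map (Int.castRingHom ℚ)).coeff N := by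
        rw [Polynomial.coeff_map]
        simp
      rw [h2, hcoefQ, hVAZ, hVBZ]
      rw [hcast A, hcast B]
    have hfne : (∏ i : Fin μ, (((i:ℕ).factorial : ℚ))) ≠ 0 :=
      Finset.prod_ne_zero_iff.mpr fun i _ => by exact_mod_cast (i:ℕ).factorial_ne_zero
    have : ((cZ * EZ.coeff N : ℤ) : ℚ) = ((VAZ * VBZ : ℤ) : ℚ) := by
      push_cast
      rw [hq]
      field_simp
      rw [hcZ]
      push_cast
      ring
    exact_mod_cast this
  -- now the contradiction argument
  intro hdet0
  have hφ : Polynomial.aeval (ε - 1) EZ = 0 := by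
    rw [hEZ]
    have := RingHom.map_det ((Polynomial.aeval (ε - 1) : ℤ[X] →ₐ[ℤ] F) : ℤ[X] →+* F)
      (Matrix.of fun i j : Fin μ => ((1:ℤ[X]) + Polynomial.X) ^ (A i * B j))
    rw [show (((Polynomial.aeval (ε - 1) : ℤ[X] →ₐ[ℤ] F) : ℤ[X] →+* F)
      ((Matrix.of fun i j : Fin μ => ((1:ℤ[X]) + Polynomial.X) ^ (A i * B j)).det))
      = Polynomial.aeval (ε - 1)
        ((Matrix.of fun i j : Fin μ => ((1:ℤ[X]) + Polynomial.X) ^ (A i * B j)).det) from rfl]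
      at this
    rw [this]
    have hent : (((Polynomial.aeval (ε - 1) : ℤ[X] →ₐ[ℤ] F) : ℤ[X] →+* F)).mapMatrix
        (Matrix.of fun i j : Fin μ => ((1:ℤ[X]) + Polynomial.X) ^ (A i * B j))
        = Matrix.of fun i j : Fin μ => ε ^ (a i * b j) := by
      refine Matrix.ext fun i j => ?_
      show Polynomial.aeval (ε - 1) (((1:ℤ[X]) + Polynomial.X) ^ (A i * B j)) = ε ^ (a i * b j)
      rw [map_pow, map_add, map_one, Polynomial.aeval_X, add_sub_cancel]
      -- ε ^ (A i * B j : ℕ) = ε ^ (a i * b j : ℤ)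
      have hdvd : (m:ℤ) ∣ a i * b j - ((A i * B j : ℕ) : ℤ) := by
        have h1 : a i * b j ≡ ((A i * B j : ℕ) : ℤ) [ZMOD (m:ℤ)] := by
          push_cast
          exact (hAmod i).mul (hBmod j)
        exact Int.ModEq.dvd (Int.ModEq.symm h1)
      have h2 : ε ^ (a i * b j) = ε ^ (((A i * B j : ℕ)) : ℤ)
          * ε ^ (a i * b j - ((A i * B j : ℕ) : ℤ)) := by
        rw [← zpow_add₀ hεne]
        congr 1
        ring
      rw [h2, (hε.zpow_eq_one_iff_dvd _).mpr hdvd, mul_one, zpow_natCast]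
    rw [hent]
    exact hdet0
  rw [hG] at hφ
  rw [map_mul, map_pow, Polynomial.aeval_X] at hφ
  have hε10 : ε - 1 ≠ 0 := sub_ne_zero.mpr hε1
  have hGφ : Polynomial.aeval (ε - 1) G = 0 := by
    rcases mul_eq_zero.mp hφ with h | h
    · exact absurd h (pow_ne_zero _ hε10)
    · exact h
  -- apply the number theory lemma to H = G.comp (X - 1)
  have hH : Polynomial.aeval ε (G.comp (Polynomial.X - 1)) = 0 := by
    rw [Polynomial.aeval_comp]
    rw [map_sub, Polynomial.aeval_X, map_one]
    exact hGφ
  have hdvdq := cheb_dvd_eval_one F m hm ε hε _ hH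
  rw [Polynomial.eval_comp] at hdvdq
  simp only [Polynomial.eval_sub, Polynomial.eval_X, Polynomial.eval_one, sub_self] at hdvdq
  rw [← Polynomial.coeff_zero_eq_eval_zero, ← hGcoeff] at hdvdq
  -- m divides VAZ * VBZ
  have hmprime : Prime ((m:ℤ)) := Nat.prime_iff_prime_int.mp hm
  have hdvdVV : (m:ℤ) ∣ VAZ * VBZ := by
    rw [← hvalue]
    exact Dvd.dvd.mul_left hdvdq cZ
  have hnodvd : ∀ (v : Fin μ → ℕ), (∀ i, v i < m) → Function.Injective v →
      ¬ (m:ℤ) ∣ (Matrix.vandermonde fun i => ((v i : ℕ) : ℤ)).det := by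
    intro v hvlt hvinj hdvd
    rw [Matrix.det_vandermonde] at hdvd
    obtain ⟨i, _, hi⟩ := (Prime.dvd_finset_prod_iff hmprime _).mp hdvd
    obtain ⟨j, hj, hij⟩ := (Prime.dvd_finset_prod_iff hmprime _).mp hi
    have hne : i ≠ j := ne_of_lt (Finset.mem_Ioi.mp hj)
    have hvne : v i ≠ v j := fun h => hne (hvinj h)
    have habs : |((v j : ℕ) : ℤ) - ((v i : ℕ) : ℤ)| < m := by
      rw [abs_sub_lt_iff]
      have := hvlt i; have := hvlt j
      omega
    have hpos : (0:ℤ) < |((v j : ℕ) : ℤ) - ((v i : ℕ) : ℤ)| := by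
      rw [abs_pos, sub_ne_zero]
      exact_mod_cast (Ne.symm hvne)
    have := Int.le_of_dvd hpos ((dvd_abs _ _).mpr hij)
    omega
  rcases hmprime.dvd_mul.mp hdvdVV with h | h
  · exact hnodvd A hAlt hAinj h
  · exact hnodvd B hBlt hBinj h
end

section
/- Construction of 2m hyperplanes in general position: Let m be prime and ε a primitive m-th root of unity in ℂ. Define 2m vectors in ℂ^m: h_j = e_{j−1} (the standard basis vector) for 1 ≤ j ≤ m, and h_{m+j} = (1, ε^{j−1}, ε^{2(j−1)}, …, ε^{(m−1)(j−1)}) for 1 ≤ j ≤ m. Then any m of these 2m vectors are linearly independent over ℂ. -/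
open Polynomial

/-- coefficient of X * derivative g -/
lemma coeff_X_mul_derivative {R : Type*} [CommRing R] (g : R[X]) (i : ℕ) :
    (X * derivative g).coeff i = (i : R) * g.coeff i := by
  cases i with
  | zero => simp
  | succ n =>
    rw [coeff_X_mul, coeff_derivative]
    push_cast
    ring

/-- Evans–Isaacs lemma: a polynomial over `ZMod p` whose support has `≤ n` elements,
all `< p`, and which is divisible by `(X-1)^n`, is zero. -/
lemma evans_isaacs {p : ℕ} (hp : p.Prime) :
    ∀ (n : ℕ) (g : (ZMod p)[X]), g.support.card ≤ n → (∀ i ∈ g.support, i < p) →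
      (X - 1) ^ n ∣ g → g = 0 := by
  haveI := Fact.mk hp
  intro n
  induction n with
  | zero =>
    intro g hcard _ _
    rwa [Nat.le_zero, Finset.card_eq_zero, support_eq_empty] at hcard
  | succ n ih =>
    intro g hcard hlt hdvd
    by_contra hg
    have hsupp : g.support.Nonempty := nonempty_support_iff.mpr hg
    set k₀ := g.support.min' hsupp with hk₀
    have hk₀mem : k₀ ∈ g.support := g.support.min'_mem hsupp
    -- the auxiliary polynomial
    set h : (ZMod p)[X] := X * derivative g - C ((k₀ : ZMod p)) * g with hh
    have hcoeff : ∀ i, h.coeff i = ((i : ZMod p) - (k₀ : ZMod p)) * g.coeff i := by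
      intro i
      rw [hh, coeff_sub, coeff_X_mul_derivative, coeff_C_mul]
      ring
    have hsub : h.support ⊆ g.support.erase k₀ := by
      intro i hi
      rw [mem_support_iff, hcoeff] at hi
      rw [Finset.mem_erase, mem_support_iff]
      constructor
      · rintro rfl; simp at hi
      · intro h0; rw [h0, mul_zero] at hi; exact hi rfl
    have hdvd' : (X - 1) ^ n ∣ h := by
      obtain ⟨q, rfl⟩ := hdvd
      have h1 : (X - 1 : (ZMod p)[X]) ^ n ∣ derivative ((X - 1) ^ (n + 1) * q) :=
        ⟨((n : (ZMod p)[X]) + 1) * q + (X - 1) * derivative q, by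
          rw [derivative_mul, derivative_pow]
          simp
          ring⟩
      exact dvd_sub (h1.mul_left X)
        (((pow_dvd_pow _ (Nat.le_succ n)).mul_right q).mul_left (C (k₀ : ZMod p)))
    have hzero : h = 0 := by
      refine ih h ?_ ?_ hdvd'
      · calc h.support.card ≤ (g.support.erase k₀).card := Finset.card_le_card hsub
          _ ≤ g.support.card - 1 := by
              rw [Finset.card_erase_of_mem hk₀mem]
          _ ≤ n := by omega
      · intro i hi; exact hlt i (Finset.mem_of_mem_erase (hsub hi))
    -- so all coefficients away from k₀ vanish
    have honly : ∀ i ∈ g.support, i = k₀ := by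
      intro i hi
      by_contra hne
      have : h.coeff i = 0 := by rw [hzero]; simp
      rw [hcoeff] at this
      rcases mul_eq_zero.mp this with h1 | h2
      · have hip := hlt i hi
        have hkp := hlt k₀ hk₀mem
        have : (i : ZMod p) = (k₀ : ZMod p) := by linear_combination h1
        have := congrArg ZMod.val this
        rw [ZMod.val_natCast_of_lt hip, ZMod.val_natCast_of_lt hkp] at this
        exact hne this
      · exact mem_support_iff.mp hi h2
    -- evaluate at 1
    have heval : g.eval 1 = 0 := by
      obtain ⟨q, rfl⟩ := hdvd
      simp
    have hsing : g.support = {k₀} := Finset.eq_singleton_iff_unique_mem.mpr ⟨hk₀mem, honly⟩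
    have : g.eval 1 = g.coeff k₀ := by
      rw [eval_eq_sum, sum_def, hsing, Finset.sum_singleton, one_pow, mul_one]
    rw [heval] at this
    exact mem_support_iff.mp hk₀mem this.symm

open Polynomial

lemma prod_X_sub_C_dvd_of_roots {R : Type*} [CommRing R] [IsDomain R] [DecidableEq R]
    (s : Finset R) : ∀ (f : R[X]), (∀ r ∈ s, f.IsRoot r) → (∏ r ∈ s, (X - C r)) ∣ f := by
  induction s using Finset.induction with
  | empty => simp
  | @insert a s ha ih =>
    intro f hf
    obtain ⟨g, rfl⟩ := dvd_iff_isRoot.mpr (hf a (Finset.mem_insert_self a s))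
    rw [Finset.prod_insert ha]
    refine mul_dvd_mul_left _ (ih g fun r hr => ?_)
    have h1 := hf r (Finset.mem_insert_of_mem hr)
    have hra : r ≠ a := fun h => ha (h ▸ hr)
    rw [IsRoot, eval_mul, eval_sub, eval_X, eval_C, mul_eq_zero] at h1
    rcases h1 with h1 | h1
    · exact absurd (sub_eq_zero.mp h1) hra
    · exact h1

open Polynomial

theorem chebotarev {p : ℕ} (hp : p.Prime) {ε : ℂ} (hε : IsPrimitiveRoot ε p)
    {n : ℕ} (a b : Fin n → ℕ) (hainj : Function.Injective a) (hbinj : Function.Injective b)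
    (halt : ∀ i, a i < p) (hblt : ∀ i, b i < p) :
    (Matrix.of fun i j : Fin n => ε ^ (a i * b j)).det ≠ 0 := by
  haveI := Fact.mk hp
  classical
  intro hdet
  -- the ring R = ℤ[X]/(Φ_p)
  set I : Ideal ℤ[X] := Ideal.span {cyclotomic p ℤ} with hI
  have hcyc_ne : cyclotomic p ℤ ≠ 0 := (cyclotomic.monic p ℤ).ne_zero
  have hcyc_prime : Prime (cyclotomic p ℤ) :=
    UniqueFactorizationMonoid.irreducible_iff_prime.mp (cyclotomic.irreducible hp.pos)
  haveI : I.IsPrime := (Ideal.span_singleton_prime hcyc_ne).mpr hcyc_prime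
  haveI : IsDomain (ℤ[X] ⧸ I) := Ideal.Quotient.isDomain I
  set R := ℤ[X] ⧸ I with hR
  set mk : ℤ[X] →+* R := Ideal.Quotient.mk I with hmk
  -- the map φ : R → ℂ
  have haevalcyc : (aeval ε) (cyclotomic p ℤ) = 0 := by
    have := hε.isRoot_cyclotomic hp.pos
    rwa [aeval_def, eval₂_eq_eval_map, map_cyclotomic, ← IsRoot.def]
  have hker : ∀ f ∈ I, (aeval ε).toRingHom f = 0 := by
    intro f hf
    rw [hI, Ideal.mem_span_singleton] at hf
    obtain ⟨g, rfl⟩ := hf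
    simp [haevalcyc]
  set φ : R →+* ℂ := Ideal.Quotient.lift I (aeval ε).toRingHom hker with hφ
  have hφmk : ∀ f : ℤ[X], φ (mk f) = aeval ε f := fun f => rfl
  have hφinj : Function.Injective φ := by
    rw [injective_iff_map_eq_zero]
    intro r hr
    obtain ⟨f, rfl⟩ := Ideal.Quotient.mk_surjective r
    rw [hφmk] at hr
    have hdvd : minpoly ℤ ε ∣ f :=
      minpoly.isIntegrallyClosed_dvd (hε.isIntegral hp.pos) hr
    rw [← cyclotomic_eq_minpoly hε hp.pos] at hdvd
    rwa [Ideal.Quotient.eq_zero_iff_mem, hI, Ideal.mem_span_singleton]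
  set x : R := mk X with hx
  have hφx : φ x = ε := by rw [hx, hφmk, aeval_X]
  -- powers of x are distinct
  have hxa_inj : Function.Injective (fun i => x ^ a i) := by
    intro i j hij
    simp only [] at hij
    have h2 : φ (x ^ a i) = φ (x ^ a j) := congrArg φ hij
    rw [map_pow, map_pow, hφx] at h2
    exact hainj (hε.pow_inj (halt i) (halt j) h2)
  -- the matrix over R and its determinant
  set MR : Matrix (Fin n) (Fin n) R := Matrix.of fun i j => x ^ (a i * b j) with hMR
  have hdetR : MR.det = 0 := by
    apply hφinj
    rw [map_zero, RingHom.map_det]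
    convert hdet using 2
    ext i j
    simp only [RingHom.mapMatrix_apply, Matrix.map_apply, Matrix.of_apply, hMR]
    rw [map_pow, hφx]
  obtain ⟨v, hv0, hvker⟩ := (Matrix.exists_mulVec_eq_zero_iff).mpr hdetR
  -- λ = x - 1
  set lam : R := x - 1 with hlam
  have hlam0 : lam ≠ 0 := by
    intro h0
    have : φ lam = 0 := by rw [h0, map_zero]
    rw [hlam, map_sub, hφx, map_one, sub_eq_zero] at this
    exact hε.ne_one hp.one_lt this
  -- the reduction map π : R → ZMod p
  set ψ : ℤ[X] →+* ZMod p := eval₂RingHom (Int.castRingHom (ZMod p)) 1 with hψ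
  have hψcyc : ψ (cyclotomic p ℤ) = 0 := by
    rw [hψ, coe_eval₂RingHom, eval₂_at_one, eval_one_cyclotomic_prime]
    simp
  have hkerψ : ∀ f ∈ I, ψ f = 0 := by
    intro f hf
    rw [hI, Ideal.mem_span_singleton] at hf
    obtain ⟨g, rfl⟩ := hf
    rw [map_mul, hψcyc, zero_mul]
  set π : R →+* ZMod p := Ideal.Quotient.lift I ψ hkerψ with hπ
  have hπmk : ∀ f : ℤ[X], π (mk f) = ψ f := fun f => rfl
  have hπx : π x = 1 := by
    rw [hx, hπmk, hψ, coe_eval₂RingHom, eval₂_X]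
  have hπlam : π lam = 0 := by rw [hlam, map_sub, hπx, map_one, sub_self]
  -- (p : R) is divisible by lam
  have hsum : (∑ i ∈ Finset.range p, x ^ i) = 0 := by
    have h1 : mk (cyclotomic p ℤ) = 0 := by
      rw [Ideal.Quotient.eq_zero_iff_mem, hI]
      exact Ideal.subset_span rfl
    rw [cyclotomic_prime ℤ p] at h1
    rw [← h1, map_sum]
    exact Finset.sum_congr rfl fun i _ => by rw [map_pow]
  have hpdvd : lam ∣ (p : R) := by
    have h2 : (p : R) = ∑ i ∈ Finset.range p, ((1 : R) - x ^ i) := by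
      rw [Finset.sum_sub_distrib, hsum, sub_zero, Finset.sum_const, Finset.card_range]
      simp
    rw [h2]
    refine Finset.dvd_sum fun i _ => ?_
    have h3 := sub_dvd_pow_sub_pow x 1 i
    rw [one_pow] at h3
    rw [hlam, show (1 : R) - x ^ i = -(x ^ i - 1) by ring]
    exact dvd_neg.mpr h3
  -- kernel of π is contained in (lam)
  have hkerπ : ∀ r : R, π r = 0 → lam ∣ r := by
    intro r hr
    obtain ⟨f, rfl⟩ := Ideal.Quotient.mk_surjective r
    rw [hπmk, hψ, coe_eval₂RingHom, eval₂_at_one] at hr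
    have hpe : (p : ℤ) ∣ f.eval 1 := by
      rwa [← ZMod.intCast_zmod_eq_zero_iff_dvd]
    obtain ⟨g, hg⟩ := @X_sub_C_dvd_sub_C_eval ℤ 1 _ f
    obtain ⟨e, he⟩ := hpe
    have hfeq : f = (X - 1) * g + C (f.eval 1) := by
      have hc1 : (C 1 : ℤ[X]) = 1 := C_1
      linear_combination hg - g * hc1
    have hmkf : mk f = lam * mk g + ((p : R) * (e : R)) := by
      have hC : ∀ z : ℤ, mk (C z) = (z : R) := fun z => by
        simpa using eq_intCast (mk.comp (C : ℤ →+* ℤ[X])) z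
      rw [hfeq, map_add, map_mul, map_sub, map_one, he, hC, hlam, hx]
      push_cast
      congr 1
      exact ((Int.cast_mul (α := R) (p : ℤ) e).trans (by rw [Int.cast_natCast]) : (((p : ℤ) * e : ℤ) : R) = (p : R) * (e : R))
    rw [hmkf]
    exact dvd_add (Dvd.intro _ rfl) (hpdvd.mul_right _)
  -- the ideal (lam)
  set J : Ideal R := Ideal.span {lam} with hJ
  have hJtop : J ≠ ⊤ := by
    intro htop
    have h1 : (1 : R) ∈ J := htop ▸ Submodule.mem_top
    rw [hJ, Ideal.mem_span_singleton] at h1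
    obtain ⟨u, hu⟩ := h1
    have h2 := congrArg π hu
    rw [map_one, map_mul, hπlam, zero_mul] at h2
    exact one_ne_zero h2
  have hKrull : (⨅ i : ℕ, J ^ i) = ⊥ := Ideal.iInf_pow_eq_bot_of_isDomain J hJtop
  obtain ⟨k0, hk0⟩ : ∃ k, v k ≠ 0 := by
    by_contra hall
    push_neg at hall
    exact hv0 (funext hall)
  have hex : ∃ t, ∃ k, v k ∉ J ^ (t + 1) := by
    by_contra hall
    push_neg at hall
    apply hk0
    rw [← Submodule.mem_bot R, ← hKrull]
    refine (Submodule.mem_iInf _).mpr fun i => ?_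
    cases i with
    | zero => simpa using Submodule.mem_top
    | succ t => exact hall t k0
  set t := Nat.find hex with ht
  obtain ⟨kstar, hkstar⟩ := Nat.find_spec hex
  have hmemt : ∀ k, v k ∈ J ^ t := by
    intro k
    rcases Nat.eq_zero_or_pos t with h0 | hpos
    · rw [h0]; simpa using Submodule.mem_top
    · obtain ⟨s, hs⟩ := Nat.exists_eq_add_of_lt hpos
      have hmin := Nat.find_min hex (show t - 1 < t by omega)
      push_neg at hmin
      have := hmin k
      rwa [show t - 1 + 1 = t by omega] at this
  have hdvd_t : ∀ k, lam ^ t ∣ v k := by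
    intro k
    have h1 := hmemt k
    rwa [hJ, Ideal.span_singleton_pow, Ideal.mem_span_singleton] at h1
  choose d hd using hdvd_t
  have hdstar : ¬ lam ∣ d kstar := by
    rintro ⟨u, hu⟩
    apply hkstar
    have hmem2 : v kstar ∈ Ideal.span {lam} ^ (t + 1) := by
      rw [Ideal.span_singleton_pow, Ideal.mem_span_singleton]
      exact ⟨u, by rw [hd kstar, hu]; ring⟩
    exact hmem2
  have hπd : π (d kstar) ≠ 0 := fun h0 => hdstar (hkerπ _ h0)
  -- the relation with d
  have hrel : ∀ j, ∑ k, x ^ (a j * b k) * d k = 0 := by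
    intro j
    have h1 : ∑ k, MR j k * v k = 0 := by
      have := congrFun hvker j
      simpa [Matrix.mulVec, dotProduct] using this
    have h2 : lam ^ t * ∑ k, x ^ (a j * b k) * d k = ∑ k, MR j k * v k := by
      rw [Finset.mul_sum]
      refine Finset.sum_congr rfl fun k _ => ?_
      rw [hMR]
      simp only [Matrix.of_apply]
      rw [hd k]
      ring
    rw [h1] at h2
    exact (mul_eq_zero.mp h2).resolve_left (pow_ne_zero t hlam0)
  -- the polynomial f
  set f : R[X] := ∑ k, C (d k) * X ^ (b k) with hf
  have hroots : ∀ j : Fin n, f.IsRoot (x ^ a j) := by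
    intro j
    rw [hf, IsRoot, eval_finset_sum]
    rw [← hrel j]
    refine Finset.sum_congr rfl fun k _ => ?_
    rw [eval_mul, eval_C, eval_pow, eval_X, ← pow_mul]
    ring
  set s : Finset R := Finset.image (fun j : Fin n => x ^ a j) Finset.univ with hs
  have hscard : s.card = n := by
    rw [hs, Finset.card_image_of_injective _ hxa_inj, Finset.card_univ, Fintype.card_fin]
  have hprod : (∏ r ∈ s, (X - C r)) ∣ f :=
    prod_X_sub_C_dvd_of_roots s f (by
      intro r hr
      rw [hs, Finset.mem_image] at hr
      obtain ⟨j, _, rfl⟩ := hr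
      exact hroots j)
  -- map by π
  have hmapdvd : ((X : (ZMod p)[X]) - 1) ^ n ∣ f.map π := by
    obtain ⟨q, hq⟩ := hprod
    refine ⟨q.map π, ?_⟩
    rw [hq, Polynomial.map_mul, Polynomial.map_prod]
    congr 1
    have hterm : ∀ r ∈ s, (X - C r).map π = X - 1 := by
      intro r hr
      rw [hs, Finset.mem_image] at hr
      obtain ⟨j, _, rfl⟩ := hr
      rw [Polynomial.map_sub, map_X, map_C, map_pow, hπx, one_pow, C_1]
    rw [Finset.prod_congr rfl hterm, Finset.prod_const, hscard]
  set fbar := f.map π with hfbar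
  have hfbar_eq : fbar = ∑ k, C (π (d k)) * X ^ (b k) := by
    rw [hfbar, hf, Polynomial.map_sum]
    refine Finset.sum_congr rfl fun k _ => ?_
    rw [Polynomial.map_mul, map_C, Polynomial.map_pow, map_X]
  have hcoeff_bar : ∀ k0 : Fin n, fbar.coeff (b k0) = π (d k0) := by
    intro k0
    rw [hfbar_eq, finset_sum_coeff]
    rw [Finset.sum_eq_single k0]
    · rw [coeff_C_mul, coeff_X_pow, if_pos rfl, mul_one]
    · intro k _ hk
      rw [coeff_C_mul, coeff_X_pow, if_neg (fun hh => hk (hbinj hh).symm), mul_zero]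
    · intro hh; exact absurd (Finset.mem_univ k0) hh
  have hsupp_sub : fbar.support ⊆ Finset.image b Finset.univ := by
    intro i hi
    rw [mem_support_iff] at hi
    by_contra hni
    apply hi
    rw [hfbar_eq, finset_sum_coeff]
    refine Finset.sum_eq_zero fun k _ => ?_
    rw [coeff_C_mul, coeff_X_pow, if_neg, mul_zero]
    intro hh; exact hni (hh ▸ Finset.mem_image_of_mem b (Finset.mem_univ k))
  have hzero : fbar = 0 := by
    refine evans_isaacs hp n fbar ?_ ?_ hmapdvd
    · calc fbar.support.card ≤ (Finset.image b Finset.univ).card :=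
          Finset.card_le_card hsupp_sub
        _ ≤ n := le_trans Finset.card_image_le (by simp)
    · intro i hi
      obtain ⟨k, _, rfl⟩ := Finset.mem_image.mp (hsupp_sub hi)
      exact hblt k
  apply hπd
  rw [← hcoeff_bar kstar, hzero, coeff_zero]




theorem stmt14 (m : ℕ) (hm : m.Prime) (ε : ℂ) (hε : IsPrimitiveRoot ε m)
    (h : Fin (2 * m) → Fin m → ℂ)
    (hdef : ∀ (j : Fin (2 * m)) (k : Fin m), h j k =
      if (j : ℕ) < m then (if (k : ℕ) = (j : ℕ) then 1 else 0)
      else ε ^ (((j : ℕ) - m) * (k : ℕ))) :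
    ∀ S : Finset (Fin (2 * m)), S.card = m →
      LinearIndependent ℂ (fun j : S => h (j : Fin (2 * m))) := by
  classical
  intro S hS
  rw [Fintype.linearIndependent_iff]
  intro g hg
  have hm2 : 0 < m := hm.pos
  -- reformulate the coefficients as a function on Fin (2*m)
  set G : Fin (2 * m) → ℂ := fun j => if hj : j ∈ S then g ⟨j, hj⟩ else 0 with hG
  have hGg : ∀ i : {x // x ∈ S}, G (i : Fin (2 * m)) = g i := by
    intro i
    rw [hG]
    simp only [i.2, dif_pos]
  -- coordinates
  have hcoord : ∀ κ : Fin m, ∑ j ∈ S, G j * h j κ = 0 := by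
    intro κ
    have h0 := congrFun hg κ
    simp only [Finset.sum_apply, Pi.smul_apply, smul_eq_mul, Pi.zero_apply] at h0
    rw [Finset.sum_subtype S (fun x => Iff.rfl) (fun j => G j * h j κ), ← h0]
    exact Finset.sum_congr rfl fun i _ => by rw [hGg i]
  -- the two parts of S
  set Sb : Finset (Fin (2 * m)) := S.filter (fun j => (j : ℕ) < m) with hSb
  set Sd : Finset (Fin (2 * m)) := S.filter (fun j => ¬ (j : ℕ) < m) with hSd
  set n := Sd.card with hn
  have hcards : Sb.card + Sd.card = m := by
    rw [hSb, hSd, Finset.card_filter_add_card_filter_not, hS]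
  -- the set of basis coordinates
  set A : Finset (Fin m) := Sb.image (fun j : Fin (2 * m) => (⟨(j : ℕ) % m, Nat.mod_lt _ hm2⟩ : Fin m)) with hA
  have hAcard : A.card = Sb.card := by
    rw [hA]
    apply Finset.card_image_of_injOn
    intro j1 h1 j2 h2 he
    have l1 : (j1 : ℕ) < m := (Finset.mem_filter.mp h1).2
    have l2 : (j2 : ℕ) < m := (Finset.mem_filter.mp h2).2
    have hv := congrArg Fin.val he
    simp only [Nat.mod_eq_of_lt l1, Nat.mod_eq_of_lt l2] at hv
    exact Fin.val_injective hv
  set K : Finset (Fin m) := Finset.univ \ A with hK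
  have hKcard : K.card = n := by
    rw [hK, Finset.card_sdiff_of_subset (Finset.subset_univ A), Finset.card_univ, Fintype.card_fin, hAcard]
    omega
  -- enumerations
  set eD : {x // x ∈ Sd} ≃ Fin n := Sd.equivFin with heD
  set eK : {x // x ∈ K} ≃ Fin n := K.equivFin.trans (finCongr hKcard) with heK
  set a : Fin n → ℕ := fun i => ((eD.symm i : Fin (2 * m)) : ℕ) - m with ha
  set b : Fin n → ℕ := fun i => ((eK.symm i : Fin m) : ℕ) with hb
  have hDmem : ∀ i, ((eD.symm i : Fin (2 * m))) ∈ Sd := fun i => (eD.symm i).2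
  have hDge : ∀ i, m ≤ ((eD.symm i : Fin (2 * m)) : ℕ) := fun i => by
    have := (Finset.mem_filter.mp (hDmem i)).2
    omega
  have hDlt : ∀ i, ((eD.symm i : Fin (2 * m)) : ℕ) < 2 * m := fun i => (eD.symm i : Fin (2 * m)).isLt
  have hainj : Function.Injective a := by
    intro i1 i2 he
    simp only [ha] at he
    have g1 := hDge i1
    have g2 := hDge i2
    apply eD.symm.injective
    apply Subtype.ext
    apply Fin.val_injective
    omega
  have hbinj : Function.Injective b := by
    intro i1 i2 he
    simp only [hb] at he
    apply eK.symm.injective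
    apply Subtype.ext
    exact Fin.val_injective he
  have halt : ∀ i, a i < m := fun i => by
    have := hDge i; have := hDlt i
    simp only [ha]
    omega
  have hblt : ∀ i, b i < m := fun i => (eK.symm i : Fin m).isLt
  have hdet := chebotarev hm hε a b hainj hbinj halt hblt
  -- the kernel vector
  set w : Fin n → ℂ := fun i => G ((eD.symm i : Fin (2 * m))) with hw
  -- vanishing of basis terms at coordinates outside A
  have hbasis0 : ∀ κ : Fin m, κ ∉ A → ∀ j ∈ Sb, G j * h j κ = 0 := by
    intro κ hκ j hj
    have hjlt : (j : ℕ) < m := (Finset.mem_filter.mp hj).2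
    rw [hdef j κ, if_pos hjlt, if_neg, mul_zero]
    intro hve
    apply hκ
    rw [hA]
    refine Finset.mem_image.mpr ⟨j, hj, ?_⟩
    apply Fin.val_injective
    simp only [Nat.mod_eq_of_lt hjlt]
    exact hve.symm
  -- the relation
  have hrel : Matrix.vecMul w (Matrix.of fun i j : Fin n => ε ^ (a i * b j)) = 0 := by
    funext k
    set κ : Fin m := (eK.symm k : Fin m) with hκdef
    have hκA : κ ∉ A := by
      have h2 : κ ∈ Finset.univ \ A := (eK.symm k).2
      exact (Finset.mem_sdiff.mp h2).2
    have hsplit : (∑ j ∈ Sb, G j * h j κ) + (∑ j ∈ Sd, G j * h j κ) = 0 := by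
      rw [hSb, hSd, Finset.sum_filter_add_sum_filter_not]
      exact hcoord κ
    rw [Finset.sum_eq_zero (hbasis0 κ hκA), zero_add] at hsplit
    have hsd : ∑ j ∈ Sd, G j * h j κ = ∑ j ∈ Sd, G j * ε ^ (((j : ℕ) - m) * (κ : ℕ)) := by
      refine Finset.sum_congr rfl fun j hj => ?_
      rw [hdef j κ, if_neg (Finset.mem_filter.mp hj).2]
    rw [hsd] at hsplit
    have hsub : ∑ j ∈ Sd, G j * ε ^ (((j : ℕ) - m) * (κ : ℕ))
        = ∑ i : {x // x ∈ Sd}, G (i : Fin (2 * m)) * ε ^ ((((i : Fin (2 * m)) : ℕ) - m) * (κ : ℕ)) :=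
      Finset.sum_subtype Sd (fun x => Iff.rfl) _
    have hequiv : ∑ i : {x // x ∈ Sd}, G (i : Fin (2 * m)) * ε ^ ((((i : Fin (2 * m)) : ℕ) - m) * (κ : ℕ))
        = ∑ i : Fin n, G ((eD.symm i : Fin (2 * m))) * ε ^ ((((eD.symm i : Fin (2 * m)) : ℕ) - m) * (κ : ℕ)) :=
      (Equiv.sum_comp eD.symm _).symm
    show ∑ i : Fin n, w i * (Matrix.of fun i j : Fin n => ε ^ (a i * b j)) i k = 0
    rw [← hsplit, hsub, hequiv]
    rfl
  have hw0 : w = 0 := Matrix.eq_zero_of_vecMul_eq_zero hdet hrel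
  -- conclude
  intro i
  by_cases hilt : ((i : Fin (2 * m)) : ℕ) < m
  · -- basis vector: use coordinate i
    set κ : Fin m := ⟨((i : Fin (2 * m)) : ℕ), hilt⟩ with hκdef
    have hsplit : (∑ j ∈ Sb, G j * h j κ) + (∑ j ∈ Sd, G j * h j κ) = 0 := by
      rw [hSb, hSd, Finset.sum_filter_add_sum_filter_not]
      exact hcoord κ
    have hGd : ∀ j ∈ Sd, G j = 0 := by
      intro j hj
      have h3 : w (eD ⟨j, hj⟩) = 0 := by rw [hw0]; rfl
      simp only [hw, Equiv.symm_apply_apply] at h3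
      exact h3
    rw [show (∑ j ∈ Sd, G j * h j κ) = 0 from
      Finset.sum_eq_zero (fun j hj => by rw [hGd j hj, zero_mul]), add_zero] at hsplit
    have hsb : ∑ j ∈ Sb, G j * h j κ = G (i : Fin (2 * m)) := by
      rw [Finset.sum_eq_single (i : Fin (2 * m))]
      · rw [hdef, if_pos hilt, if_pos rfl, mul_one]
      · intro j hj hne
        have hjlt : (j : ℕ) < m := (Finset.mem_filter.mp hj).2
        rw [hdef j κ, if_pos hjlt, if_neg, mul_zero]
        intro hve
        exact hne (Fin.val_injective (hve.symm.trans (show (κ : ℕ) = ((i : Fin (2*m)) : ℕ) from rfl)))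
      · intro hni
        exact absurd (Finset.mem_filter.mpr ⟨i.2, hilt⟩) hni
    rw [hsb] at hsplit
    rw [← hGg i]
    exact hsplit
  · -- DFT vector
    have hiSd : (i : Fin (2 * m)) ∈ Sd := Finset.mem_filter.mpr ⟨i.2, hilt⟩
    have h3 : w (eD ⟨(i : Fin (2 * m)), hiSd⟩) = 0 := by rw [hw0]; rfl
    simp only [hw, Equiv.symm_apply_apply] at h3
    rw [← hGg i]
    exact h3
end
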